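/- arXiv:2210.06024 — 6 statements merged into one kernel-verified Lean document; each statement's English description precedes it below -/
import Mathlib

section
/- Let x ∈ M_I and y ∈ M_J for some I, J ∈ 𝓘. Then the commutator [γ_k(x), y] vanishes for all but finitely many k ∈ ℤ, and for all finite subsets S, T ⊆ ℤ one has ‖[∑_{j∈S} γ_j(x), ∑_{l∈T} γ_l(y)]‖ ≤ min(|S|, |T|) · ∑_{k∈ℤ} ‖[γ_k(x), y]‖. -/
open Filter Topology

open scoped ComplexOrder

theorem commutator_sum_norm_bound
    {A : Type*} [NormedRing A] [StarRing A] [CStarRing A] [NormedAlgebra ℂ A]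
    [CompleteSpace A] [StarModule ℂ A]
    (M : ℤ → ℤ → Subalgebra ℂ A)
    (hmono : ∀ a b c d : ℤ, a ≤ b → c ≤ a → b ≤ d → M a b ≤ M c d)
    (hdense : Dense {x : A | ∃ a b : ℤ, a ≤ b ∧ x ∈ M a b})
    (hcomm : ∀ a b c d : ℤ, a ≤ b → c ≤ d → (b < c ∨ d < a) →
      ∀ x ∈ M a b, ∀ y ∈ M c d, x * y = y * x)
    (γ : ℤ → A ≃⋆ₐ[ℂ] A)
    (hγ0 : ∀ x : A, γ 0 x = x)
    (hγadd : ∀ j k : ℤ, ∀ x : A, γ (j + k) x = γ j (γ k x))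
    (hγM : ∀ j a b : ℤ, a ≤ b → ⇑(γ j) '' (M a b : Set A) = (M (a + j) (b + j) : Set A))
    (x y : A) (a b c d : ℤ) (hab : a ≤ b) (hcd : c ≤ d)
    (hx : x ∈ M a b) (hy : y ∈ M c d) :
    {k : ℤ | γ k x * y - y * γ k x ≠ 0}.Finite ∧
      ∀ S T : Finset ℤ,
        ‖(∑ j ∈ S, γ j x) * (∑ l ∈ T, γ l y) - (∑ l ∈ T, γ l y) * (∑ j ∈ S, γ j x)‖ ≤
          (min S.card T.card : ℝ) * ∑' k : ℤ, ‖γ k x * y - y * γ k x‖ := by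
  letI : CStarAlgebra A :=
    { ‹NormedRing A›, ‹StarRing A›, ‹CStarRing A›, ‹NormedAlgebra ℂ A›,
      ‹CompleteSpace A›, ‹StarModule ℂ A› with }
  set f : ℤ → A := fun k => γ k x * y - y * γ k x with hf
  have hmem : ∀ k : ℤ, γ k x ∈ M (a + k) (b + k) := by
    intro k
    have h := hγM k a b hab
    have : γ k x ∈ (M (a + k) (b + k) : Set A) := h ▸ ⟨x, hx, rfl⟩
    exact this
  have hzero : ∀ k : ℤ, k < c - b ∨ d - a < k → f k = 0 := by
    intro k hk
    have hcomm' := hcomm (a + k) (b + k) c d (by linarith) hcd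
      (by rcases hk with h | h
          · left; linarith
          · right; linarith)
      (γ k x) (hmem k) y hy
    simp [hf, hcomm']
  have hfin : {k : ℤ | f k ≠ 0}.Finite := by
    apply (Set.finite_Icc (c - b) (d - a)).subset
    intro k hk
    simp only [Set.mem_setOf_eq] at hk
    by_contra h
    simp only [Set.mem_Icc, not_and_or, not_le] at h
    exact hk (hzero k (by tauto))
  refine ⟨hfin, ?_⟩
  have hsummable : Summable (fun k => ‖f k‖) := by
    apply summable_of_ne_finset_zero (s := hfin.toFinset)
    intro k hk
    simp only [Set.Finite.mem_toFinset, Set.mem_setOf_eq, not_not] at hk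
    simp [hk]
  set t : ℝ := ∑' k : ℤ, ‖f k‖ with ht
  have ht0 : 0 ≤ t := tsum_nonneg fun _ => norm_nonneg _
  have hnorm_eq : ∀ j l : ℤ, ‖γ j x * γ l y - γ l y * γ j x‖ = ‖f (j - l)‖ := by
    intro j l
    have h1 : γ j x = γ l (γ (j - l) x) := by
      rw [← hγadd]; congr 1; ring
    rw [h1, ← map_mul, ← map_mul, ← map_sub, StarAlgEquiv.norm_map]
  intro S T
  have expand : (∑ j ∈ S, γ j x) * (∑ l ∈ T, γ l y) - (∑ l ∈ T, γ l y) * (∑ j ∈ S, γ j x)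
      = ∑ j ∈ S, ∑ l ∈ T, (γ j x * γ l y - γ l y * γ j x) := by
    rw [Finset.sum_mul_sum, Finset.sum_mul_sum, Finset.sum_comm (s := T) (t := S),
      ← Finset.sum_sub_distrib]
    exact Finset.sum_congr rfl fun j _ => (Finset.sum_sub_distrib _ _).symm
  have key : ∀ (U V : Finset ℤ),
      ∑ j ∈ U, ∑ l ∈ V, ‖γ j x * γ l y - γ l y * γ j x‖ ≤ (U.card : ℝ) * t := by
    intro U V
    have hle : ∀ j : ℤ, ∑ l ∈ V, ‖γ j x * γ l y - γ l y * γ j x‖ ≤ t := by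
      intro j
      calc ∑ l ∈ V, ‖γ j x * γ l y - γ l y * γ j x‖
          = ∑ l ∈ V, ‖f (j - l)‖ := Finset.sum_congr rfl fun l _ => hnorm_eq j l
        _ = ∑ k ∈ V.image (fun l => j - l), ‖f k‖ :=
            (Finset.sum_image (f := fun k => ‖f k‖) (g := fun l : ℤ => j - l)
              (fun p _ q _ h => sub_right_injective h)).symm
        _ ≤ t := Summable.sum_le_tsum _ (fun k _ => norm_nonneg _) hsummable
    calc ∑ j ∈ U, ∑ l ∈ V, ‖γ j x * γ l y - γ l y * γ j x‖
        ≤ ∑ j ∈ U, t := Finset.sum_le_sum fun j _ => hle j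
      _ = (U.card : ℝ) * t := by rw [Finset.sum_const, nsmul_eq_mul]
  have hnorm_le : ‖(∑ j ∈ S, γ j x) * (∑ l ∈ T, γ l y) - (∑ l ∈ T, γ l y) * (∑ j ∈ S, γ j x)‖
      ≤ ∑ j ∈ S, ∑ l ∈ T, ‖γ j x * γ l y - γ l y * γ j x‖ := by
    rw [expand]
    calc ‖∑ j ∈ S, ∑ l ∈ T, (γ j x * γ l y - γ l y * γ j x)‖
        ≤ ∑ j ∈ S, ‖∑ l ∈ T, (γ j x * γ l y - γ l y * γ j x)‖ := norm_sum_le _ _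
      _ ≤ ∑ j ∈ S, ∑ l ∈ T, ‖γ j x * γ l y - γ l y * γ j x‖ :=
          Finset.sum_le_sum fun j _ => norm_sum_le _ _
  have boundS : ‖(∑ j ∈ S, γ j x) * (∑ l ∈ T, γ l y) - (∑ l ∈ T, γ l y) * (∑ j ∈ S, γ j x)‖
      ≤ (S.card : ℝ) * t := hnorm_le.trans (key S T)
  have boundT : ‖(∑ j ∈ S, γ j x) * (∑ l ∈ T, γ l y) - (∑ l ∈ T, γ l y) * (∑ j ∈ S, γ j x)‖
      ≤ (T.card : ℝ) * t := by
    refine hnorm_le.trans ?_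
    rw [Finset.sum_comm]
    calc ∑ l ∈ T, ∑ j ∈ S, ‖γ j x * γ l y - γ l y * γ j x‖
        = ∑ l ∈ T, ∑ j ∈ S, ‖γ l y * γ j x - γ j x * γ l y‖ := by
          refine Finset.sum_congr rfl fun l _ => Finset.sum_congr rfl fun j _ => ?_
          rw [← norm_neg, neg_sub]
      _ ≤ ∑ l ∈ T, t := Finset.sum_le_sum fun l _ => by
          calc ∑ j ∈ S, ‖γ l y * γ j x - γ j x * γ l y‖
              = ∑ j ∈ S, ‖γ j x * γ l y - γ l y * γ j x‖ := by
                refine Finset.sum_congr rfl fun j _ => ?_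
                rw [← norm_neg, neg_sub]
            _ = ∑ j ∈ S, ‖f (j - l)‖ := Finset.sum_congr rfl fun j _ => hnorm_eq j l
            _ = ∑ k ∈ S.image (fun j => j - l), ‖f k‖ :=
                (Finset.sum_image (f := fun k => ‖f k‖) (g := fun j : ℤ => j - l)
                  (fun p _ q _ h => sub_left_injective h)).symm
            _ ≤ t := Summable.sum_le_tsum _ (fun k _ => norm_nonneg _) hsummable
      _ = (T.card : ℝ) * t := by rw [Finset.sum_const, nsmul_eq_mul]
  rcases le_total S.card T.card with h | h
  · rw [min_eq_left (Nat.cast_le.mpr h : (S.card : ℝ) ≤ T.card)]; exact boundS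
  · rw [min_eq_right (Nat.cast_le.mpr h : (T.card : ℝ) ≤ S.card)]; exact boundT
end

section
/- For all x, y ∈ M₀ₛₐ one has lim_{n→∞} χ(F_n(x)·F_n(y)) = ∑_{k∈ℤ} (χ(x·γ_k(y)) − χ(x)χ(y)) = s_χ(x,y) − i·σ_χ(x,y), where the sum has only finitely many nonzero terms. -/
open Filter Topology

open scoped ComplexOrder

/-- The local fluctuation `F_{I_n}(x)` of `x` over the interval `I_n = [ia n, ib n]`. -/
noncomputable def Fn {A : Type*} [NormedRing A] [StarRing A] [NormedAlgebra ℂ A]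
    [StarModule ℂ A] (γ : ℤ → A ≃⋆ₐ[ℂ] A) (χ : A →ₗ[ℂ] ℂ) (ia ib : ℕ → ℤ)
    (n : ℕ) (x : A) : A :=
  (Real.sqrt ((Finset.Icc (ia n) (ib n)).card) : ℂ)⁻¹ •
    ∑ j ∈ Finset.Icc (ia n) (ib n), (γ j x - χ x • 1)

/-- The (finitely supported) covariance sum `∑_{k∈ℤ} (χ(x·γ_k(y)) − χ(x)χ(y))`. -/
noncomputable def covT {A : Type*} [NormedRing A] [StarRing A] [NormedAlgebra ℂ A]
    [StarModule ℂ A] (γ : ℤ → A ≃⋆ₐ[ℂ] A) (χ : A →ₗ[ℂ] ℂ) (x y : A) : ℂ :=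
  ∑' k : ℤ, (χ (x * γ k y) - χ x * χ y)

/-- The symmetric bilinear form `s_χ(x,y)`. -/
noncomputable def sChi {A : Type*} [NormedRing A] [StarRing A] [NormedAlgebra ℂ A]
    [StarModule ℂ A] (γ : ℤ → A ≃⋆ₐ[ℂ] A) (χ : A →ₗ[ℂ] ℂ) (x y : A) : ℝ :=
  (covT γ χ x y).re

/-- The symplectic form `σ_χ(x,y)`. -/
noncomputable def sigmaChi {A : Type*} [NormedRing A] [StarRing A] [NormedAlgebra ℂ A]
    [StarModule ℂ A] (γ : ℤ → A ≃⋆ₐ[ℂ] A) (χ : A →ₗ[ℂ] ℂ) (x y : A) : ℝ :=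
  -(covT γ χ x y).im

/-!
Expanding the product and using the invariance of `χ`, `χ(F_n(x) F_n(y))` is the average
`|I_n|⁻¹ ∑_{j,l ∈ I_n} c(l - j)` with `c(k) = χ(x γ_k(y)) - χ(x)χ(y)`. Since `x` and `γ_k(y)` are
localized in disjoint intervals for all but finitely many `k`, multiplicativity of `χ` makes `c`
finitely supported; each `k` occurs `|I_n| - |k|` times as a difference `l - j`, so the average
tends to `∑_k c(k)`.
-/

open Finset

lemma Int.card_filter_add_mem_Icc (a b m : ℤ) :
    #{j ∈ Icc a b | j + m ∈ Icc a b} = #(Icc a b) - m.natAbs := by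
  have : {j ∈ Icc a b | j + m ∈ Icc a b} = Icc (max a (a - m)) (min b (b - m)) := by
    ext j; simp only [mem_filter, mem_Icc]; omega
  rw [this, Int.card_Icc, Int.card_Icc]; omega

lemma sum_comp_sub_eq_sum_filter {M : Type*} [AddCommMonoid M] {S : Finset ℤ} {g : ℤ → M}
    (hg : ∀ m ∉ S, g m = 0) (I : Finset ℤ) (j : ℤ) :
    ∑ l ∈ I, g (l - j) = ∑ m ∈ S with j + m ∈ I, g m := by
  rw [← sum_filter_of_ne (p := fun l => l - j ∈ S) fun l _ h => by_contra fun hl => h (hg _ hl)]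
  refine sum_nbij' (· - j) (j + ·) ?_ ?_ ?_ ?_ fun _ _ => rfl <;> intro l hl <;>
    simp_all

lemma sum_sum_sub_eq_sum_card_smul {M : Type*} [AddCommMonoid M] {S : Finset ℤ} {g : ℤ → M}
    (hg : ∀ m ∉ S, g m = 0) (I : Finset ℤ) :
    ∑ j ∈ I, ∑ l ∈ I, g (l - j) = ∑ m ∈ S, #{j ∈ I | j + m ∈ I} • g m := by
  simp_rw [sum_comp_sub_eq_sum_filter hg, sum_filter]
  rw [sum_comm]
  refine sum_congr rfl fun m _ => ?_
  rw [← sum_filter, sum_const]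

lemma tendsto_card_Icc_atTop {ia ib : ℕ → ℤ} (ha : Antitone ia) (hb : Monotone ib)
    (hcover : ∀ k, ∃ n, ia n ≤ k ∧ k ≤ ib n) :
    Tendsto (fun n => #(Icc (ia n) (ib n))) atTop atTop := by
  refine tendsto_atTop_atTop.2 fun B => ?_
  obtain ⟨n₁, hn₁, -⟩ := hcover (-B)
  obtain ⟨n₂, -, hn₂⟩ := hcover B
  refine ⟨max n₁ n₂, fun n hn => ?_⟩
  have h₁ := ha (le_of_max_le_left hn)
  have h₂ := hb (le_of_max_le_right hn)
  rw [Int.card_Icc]; omega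

lemma tendsto_inv_card_mul_sum_sum_sub {𝕜 : Type*} [RCLike 𝕜] {S : Finset ℤ} {g : ℤ → 𝕜}
    (hg : ∀ m ∉ S, g m = 0) {ι : Type*} {l : Filter ι} {ia ib : ι → ℤ}
    (hN : Tendsto (fun n => #(Icc (ia n) (ib n))) l atTop) :
    Tendsto (fun n => (#(Icc (ia n) (ib n)) : 𝕜)⁻¹ *
      ∑ j ∈ Icc (ia n) (ib n), ∑ k ∈ Icc (ia n) (ib n), g (k - j)) l (𝓝 (∑ m ∈ S, g m)) := by
  have hinv : Tendsto (fun n => (#(Icc (ia n) (ib n)) : 𝕜)⁻¹) l (𝓝 0) :=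
    tendsto_inv_atTop_nhds_zero_nat.comp hN
  have hcoef (m : ℤ) : Tendsto (fun n => (#(Icc (ia n) (ib n)) : 𝕜)⁻¹ *
      (#{j ∈ Icc (ia n) (ib n) | j + m ∈ Icc (ia n) (ib n)} : 𝕜)) l (𝓝 1) := by
    have hlim : Tendsto (fun n => 1 - (m.natAbs : 𝕜) * (#(Icc (ia n) (ib n)) : 𝕜)⁻¹) l (𝓝 1) := by
      simpa using (hinv.const_mul (m.natAbs : 𝕜)).const_sub 1
    refine hlim.congr' ?_
    filter_upwards [hN.eventually (eventually_gt_atTop m.natAbs)] with n hn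
    rw [Int.card_filter_add_mem_Icc, Nat.cast_sub hn.le, mul_sub,
      inv_mul_cancel₀ (Nat.cast_ne_zero.2 (by omega)), mul_comm]
  have hsum := tendsto_finsetSum S fun m _ => (hcoef m).mul_const (g m)
  simp only [one_mul] at hsum
  refine hsum.congr fun n => ?_
  rw [sum_sum_sub_eq_sum_card_smul hg, mul_sum]
  simp only [nsmul_eq_mul, mul_assoc]

lemma map_centered_mul_centered {R A : Type*} [CommRing R] [Ring A] [Star A] [Algebra R A]
    {γ : ℤ → A ≃⋆ₐ[R] A} {χ : A →ₗ[R] R} (hγadd : ∀ j k : ℤ, ∀ x : A, γ (j + k) x = γ j (γ k x))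
    (hχ1 : χ 1 = 1) (hχinv : ∀ j : ℤ, ∀ x : A, χ (γ j x) = χ x) (j l : ℤ) (x y : A) :
    χ ((γ j x - χ x • 1) * (γ l y - χ y • 1)) = χ (x * γ (l - j) y) - χ x * χ y := by
  have hshift : χ (γ j x * γ l y) = χ (x * γ (l - j) y) := by
    rw [← hχinv j (x * _), map_mul (γ j), ← hγadd, add_sub_cancel]
  simp only [sub_mul, mul_sub, smul_mul_assoc, mul_smul_comm, one_mul, mul_one, map_sub,
    map_smul, smul_eq_mul, hχ1, hshift, hχinv]
  ring

lemma map_Fn_mul_Fn {A : Type*} [NormedRing A] [StarRing A] [NormedAlgebra ℂ A]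
    [StarModule ℂ A] {γ : ℤ → A ≃⋆ₐ[ℂ] A} {χ : A →ₗ[ℂ] ℂ}
    (hγadd : ∀ j k : ℤ, ∀ x : A, γ (j + k) x = γ j (γ k x))
    (hχ1 : χ 1 = 1) (hχinv : ∀ j : ℤ, ∀ x : A, χ (γ j x) = χ x) (ia ib : ℕ → ℤ) (n : ℕ) (x y : A) :
    χ (Fn γ χ ia ib n x * Fn γ χ ia ib n y) = (#(Icc (ia n) (ib n)) : ℂ)⁻¹ *
      ∑ j ∈ Icc (ia n) (ib n), ∑ l ∈ Icc (ia n) (ib n), (χ (x * γ (l - j) y) - χ x * χ y) := by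
  have hsqrt : (Real.sqrt #(Icc (ia n) (ib n)) : ℂ)⁻¹ * (Real.sqrt #(Icc (ia n) (ib n)) : ℂ)⁻¹ =
      (#(Icc (ia n) (ib n)) : ℂ)⁻¹ := by
    rw [← mul_inv, ← Complex.ofReal_mul, Real.mul_self_sqrt (Nat.cast_nonneg _),
      Complex.ofReal_natCast]
  simp only [Fn, smul_mul_smul_comm, map_smul, smul_eq_mul, hsqrt, sum_mul_sum, map_sum,
    map_centered_mul_centered hγadd hχ1 hχinv]

lemma map_mul_shift_eq_of_notMem {A : Type*} [Ring A] [Star A] [Algebra ℂ A]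
    {M : ℤ → ℤ → Subalgebra ℂ A} {γ : ℤ → A ≃⋆ₐ[ℂ] A} {χ : A →ₗ[ℂ] ℂ}
    (hγM : ∀ j a b : ℤ, a ≤ b → ⇑(γ j) '' (M a b : Set A) = (M (a + j) (b + j) : Set A))
    (hχinv : ∀ j : ℤ, ∀ x : A, χ (γ j x) = χ x)
    (hχmult : ∀ a b c d : ℤ, a ≤ b → c ≤ d → (b < c ∨ d < a) →
      ∀ x ∈ M a b, ∀ y ∈ M c d, χ (x * y) = χ x * χ y)
    {a b c d : ℤ} (hab : a ≤ b) (hcd : c ≤ d) {x y : A} (hx : x ∈ M a b) (hy : y ∈ M c d)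
    {k : ℤ} (hk : k ∉ Icc (a - d) (b - c)) : χ (x * γ k y) = χ x * χ y := by
  have hγy : γ k y ∈ M (c + k) (d + k) := by
    rw [← SetLike.mem_coe, ← hγM k c d hcd]
    exact Set.mem_image_of_mem _ hy
  rw [mem_Icc] at hk
  rw [hχmult a b (c + k) (d + k) hab (by omega) (by omega) x hx _ hγy, hχinv]

theorem fluctuation_covariance_limit_general
    {A : Type*} [NormedRing A] [StarRing A] [NormedAlgebra ℂ A]
    [StarModule ℂ A]
    (M : ℤ → ℤ → Subalgebra ℂ A)
    (γ : ℤ → A ≃⋆ₐ[ℂ] A)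
    (hγadd : ∀ j k : ℤ, ∀ x : A, γ (j + k) x = γ j (γ k x))
    (hγM : ∀ j a b : ℤ, a ≤ b → ⇑(γ j) '' (M a b : Set A) = (M (a + j) (b + j) : Set A))
    (χ : A →ₗ[ℂ] ℂ)
    (hχ1 : χ 1 = 1)
    (hχinv : ∀ j : ℤ, ∀ x : A, χ (γ j x) = χ x)
    (hχmult : ∀ a b c d : ℤ, a ≤ b → c ≤ d → (b < c ∨ d < a) →
      ∀ x ∈ M a b, ∀ y ∈ M c d, χ (x * y) = χ x * χ y)
    (ia ib : ℕ → ℤ)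
    (hImono : ∀ n : ℕ, ia (n + 1) ≤ ia n ∧ ib n ≤ ib (n + 1))
    (hIunion : ∀ k : ℤ, ∃ n : ℕ, ia n ≤ k ∧ k ≤ ib n)
    (x y : A)
    (hx : (∃ a b : ℤ, a ≤ b ∧ x ∈ M a b) ∧ IsSelfAdjoint x)
    (hy : (∃ a b : ℤ, a ≤ b ∧ y ∈ M a b) ∧ IsSelfAdjoint y) :
    {k : ℤ | χ (x * γ k y) ≠ χ x * χ y}.Finite ∧
      Tendsto (fun n : ℕ => χ (Fn γ χ ia ib n x * Fn γ χ ia ib n y)) atTop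
        (𝓝 (covT γ χ x y)) ∧
      covT γ χ x y = (sChi γ χ x y : ℂ) - Complex.I * (sigmaChi γ χ x y : ℂ) := by
  obtain ⟨⟨a, b, hab, hxM⟩, -⟩ := hx
  obtain ⟨⟨c, d, hcd, hyM⟩, -⟩ := hy
  have hsupp {k : ℤ} (hk : k ∉ Icc (a - d) (b - c)) : χ (x * γ k y) = χ x * χ y :=
    map_mul_shift_eq_of_notMem hγM hχinv hχmult hab hcd hxM hyM hk
  have hcov : covT γ χ x y = ∑ k ∈ Icc (a - d) (b - c), (χ (x * γ k y) - χ x * χ y) :=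
    tsum_eq_sum fun k hk => sub_eq_zero.2 (hsupp hk)
  refine ⟨(Icc (a - d) (b - c)).finite_toSet.subset fun k hk => by_contra fun hkS => hk (hsupp hkS),
    ?_, ?_⟩
  · have hN := tendsto_card_Icc_atTop (antitone_nat_of_succ_le fun n => (hImono n).1)
      (monotone_nat_of_le_succ fun n => (hImono n).2) hIunion
    rw [hcov]
    simp only [map_Fn_mul_Fn hγadd hχ1 hχinv]
    exact tendsto_inv_card_mul_sum_sum_sub (fun k hk => sub_eq_zero.2 (hsupp hk)) hN
  · rw [sChi, sigmaChi, Complex.ofReal_neg, mul_neg, sub_neg_eq_add, mul_comm, Complex.re_add_im]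

theorem fluctuation_covariance_limit
    {A : Type*} [NormedRing A] [StarRing A] [CStarRing A] [NormedAlgebra ℂ A]
    [CompleteSpace A] [StarModule ℂ A]
    (M : ℤ → ℤ → Subalgebra ℂ A)
    (hmono : ∀ a b c d : ℤ, a ≤ b → c ≤ a → b ≤ d → M a b ≤ M c d)
    (hdense : Dense {x : A | ∃ a b : ℤ, a ≤ b ∧ x ∈ M a b})
    (hcomm : ∀ a b c d : ℤ, a ≤ b → c ≤ d → (b < c ∨ d < a) →
      ∀ x ∈ M a b, ∀ y ∈ M c d, x * y = y * x)
    (γ : ℤ → A ≃⋆ₐ[ℂ] A)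
    (hγ0 : ∀ x : A, γ 0 x = x)
    (hγadd : ∀ j k : ℤ, ∀ x : A, γ (j + k) x = γ j (γ k x))
    (hγM : ∀ j a b : ℤ, a ≤ b → ⇑(γ j) '' (M a b : Set A) = (M (a + j) (b + j) : Set A))
    (χ : A →ₗ[ℂ] ℂ)
    (hχ1 : χ 1 = 1)
    (hχpos : ∀ x : A, 0 ≤ χ (star x * x))
    (hχinv : ∀ j : ℤ, ∀ x : A, χ (γ j x) = χ x)
    (hχmult : ∀ a b c d : ℤ, a ≤ b → c ≤ d → (b < c ∨ d < a) →
      ∀ x ∈ M a b, ∀ y ∈ M c d, χ (x * y) = χ x * χ y)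
    (ia ib : ℕ → ℤ)
    (hI : ∀ n : ℕ, ia n ≤ ib n)
    (hImono : ∀ n : ℕ, ia (n + 1) ≤ ia n ∧ ib n ≤ ib (n + 1))
    (hIunion : ∀ k : ℤ, ∃ n : ℕ, ia n ≤ k ∧ k ≤ ib n)
    (x y : A)
    (hx : (∃ a b : ℤ, a ≤ b ∧ x ∈ M a b) ∧ IsSelfAdjoint x)
    (hy : (∃ a b : ℤ, a ≤ b ∧ y ∈ M a b) ∧ IsSelfAdjoint y) :
    {k : ℤ | χ (x * γ k y) ≠ χ x * χ y}.Finite ∧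
      Tendsto (fun n : ℕ => χ (Fn γ χ ia ib n x * Fn γ χ ia ib n y)) atTop
        (𝓝 (covT γ χ x y)) ∧
      covT γ χ x y = (sChi γ χ x y : ℂ) - Complex.I * (sigmaChi γ χ x y : ℂ) :=
  fluctuation_covariance_limit_general M γ hγadd hγM χ hχ1 hχinv hχmult ia ib hImono hIunion x y hx
    hy
end

section
/- The kernel (x, y) ↦ s_χ(x,y) − i·σ_χ(x,y) on M₀ₛₐ is positive semidefinite: for any m ≥ 1, any x₁, …, x_m ∈ M₀ₛₐ and any c₁, …, c_m ∈ ℂ, the number ∑_{i=1}^m ∑_{j=1}^m \overline{c_i}·c_j·(s_χ(x_i, x_j) − i·σ_χ(x_i, x_j)) is real and nonnegative. -/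
open Filter Topology

open scoped ComplexOrder

/-- Splitting an integer-interval sum. -/
lemma sum_Icc_split (g : ℤ → ℂ) (N : ℕ) :
    ∑ d ∈ Finset.Icc (-(N:ℤ)) N, g d
      = ∑ d ∈ Finset.Icc (-(N:ℤ)) (-1), g d + ∑ d ∈ Finset.Icc (0:ℤ) N, g d := by
  rw [← Finset.sum_union]
  · congr 1
    ext d
    simp only [Finset.mem_union, Finset.mem_Icc]
    omega
  · rw [Finset.disjoint_left]
    intro d hd hd'
    simp only [Finset.mem_Icc] at hd hd'
    omega

lemma reindex_neg (g : ℤ → ℂ) (N : ℕ) :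
    ∑ l ∈ Finset.range N, g ((l:ℤ) - N) = ∑ d ∈ Finset.Icc (-(N:ℤ)) (-1), g d := by
  refine Finset.sum_nbij' (fun l => (l:ℤ) - N) (fun d => (d + N).toNat) ?_ ?_ ?_ ?_ ?_
  · intro l hl
    simp only [Finset.mem_range] at hl
    simp only [Finset.mem_Icc]
    omega
  · intro d hd
    simp only [Finset.mem_Icc] at hd
    simp only [Finset.mem_range]
    omega
  · intro l hl
    simp only [Finset.mem_range] at hl
    omega
  · intro d hd
    simp only [Finset.mem_Icc] at hd
    omega
  · intro l _; rfl

lemma reindex_pos (g : ℤ → ℂ) (N : ℕ) :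
    ∑ k ∈ Finset.range (N + 1), g ((N:ℤ) - k) = ∑ d ∈ Finset.Icc (0:ℤ) N, g d := by
  refine Finset.sum_nbij' (fun k => (N:ℤ) - k) (fun d => ((N:ℤ) - d).toNat) ?_ ?_ ?_ ?_ ?_
  · intro k hk
    simp only [Finset.mem_range] at hk
    simp only [Finset.mem_Icc]
    omega
  · intro d hd
    simp only [Finset.mem_Icc] at hd
    simp only [Finset.mem_range]
    omega
  · intro k hk
    simp only [Finset.mem_range] at hk
    omega
  · intro d hd
    simp only [Finset.mem_Icc] at hd
    omega
  · intro k _; rfl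

theorem covariance_kernel_posSemidef
    {A : Type*} [NormedRing A] [StarRing A] [CStarRing A] [NormedAlgebra ℂ A]
    [CompleteSpace A] [StarModule ℂ A]
    (M : ℤ → ℤ → Subalgebra ℂ A)
    (hmono : ∀ a b c d : ℤ, a ≤ b → c ≤ a → b ≤ d → M a b ≤ M c d)
    (hdense : Dense {x : A | ∃ a b : ℤ, a ≤ b ∧ x ∈ M a b})
    (hcomm : ∀ a b c d : ℤ, a ≤ b → c ≤ d → (b < c ∨ d < a) →
      ∀ x ∈ M a b, ∀ y ∈ M c d, x * y = y * x)
    (γ : ℤ → A ≃⋆ₐ[ℂ] A)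
    (hγ0 : ∀ x : A, γ 0 x = x)
    (hγadd : ∀ j k : ℤ, ∀ x : A, γ (j + k) x = γ j (γ k x))
    (hγM : ∀ j a b : ℤ, a ≤ b → ⇑(γ j) '' (M a b : Set A) = (M (a + j) (b + j) : Set A))
    (χ : A →ₗ[ℂ] ℂ)
    (hχ1 : χ 1 = 1)
    (hχpos : ∀ x : A, 0 ≤ χ (star x * x))
    (hχinv : ∀ j : ℤ, ∀ x : A, χ (γ j x) = χ x)
    (hχmult : ∀ a b c d : ℤ, a ≤ b → c ≤ d → (b < c ∨ d < a) →
      ∀ x ∈ M a b, ∀ y ∈ M c d, χ (x * y) = χ x * χ y)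
    (m : ℕ) (hm : 1 ≤ m) (x : Fin m → A)
    (hx : ∀ i : Fin m, (∃ a b : ℤ, a ≤ b ∧ x i ∈ M a b) ∧ IsSelfAdjoint (x i))
    (c : Fin m → ℂ) :
    0 ≤ ∑ i : Fin m, ∑ j : Fin m,
      (starRingEnd ℂ) (c i) * c j *
        ((sChi γ χ (x i) (x j) : ℂ) - Complex.I * (sigmaChi γ χ (x i) (x j) : ℂ)) := by
  classical
  -- the kernel function
  set g : Fin m → Fin m → ℤ → ℂ :=
    fun i j d => χ (x i * γ d (x j)) - χ (x i) * χ (x j) with hgdef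
  -- localization intervals
  obtain ⟨a, b, hab⟩ : ∃ a b : Fin m → ℤ, ∀ i, a i ≤ b i ∧ x i ∈ M (a i) (b i) := by
    choose a b h1 h2 using fun i => (hx i).1
    exact ⟨a, b, fun i => ⟨h1 i, h2 i⟩⟩
  set Q : ℤ := ∑ i : Fin m, (|a i| + |b i|) with hQdef
  have hQ0 : 0 ≤ Q := Finset.sum_nonneg fun i _ => by positivity
  have hQbound : ∀ i : Fin m, |a i| ≤ Q ∧ |b i| ≤ Q := by
    intro i
    constructor
    · calc |a i| ≤ |a i| + |b i| := le_add_of_nonneg_right (abs_nonneg _)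
        _ ≤ Q := Finset.single_le_sum (f := fun i => |a i| + |b i|)
            (fun i _ => by positivity) (Finset.mem_univ i)
    · calc |b i| ≤ |a i| + |b i| := le_add_of_nonneg_left (abs_nonneg _)
        _ ≤ Q := Finset.single_le_sum (f := fun i => |a i| + |b i|)
            (fun i _ => by positivity) (Finset.mem_univ i)
  set R : ℤ := 2 * Q with hRdef
  have hR0 : 0 ≤ R := by omega
  -- γ maps localized elements
  have hγmem : ∀ (d : ℤ) (j : Fin m), γ d (x j) ∈ M (a j + d) (b j + d) := by
    intro d j
    have h := hγM d (a j) (b j) (hab j).1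
    have : γ d (x j) ∈ (M (a j + d) (b j + d) : Set A) := by
      rw [← h]; exact ⟨x j, (hab j).2, rfl⟩
    exact this
  -- vanishing of g outside a window
  have hgvan : ∀ (i j : Fin m) (d : ℤ), d ∉ Finset.Icc (-R) R → g i j d = 0 := by
    intro i j d hd
    simp only [Finset.mem_Icc, not_and_or, not_le] at hd
    have hχγ : χ (γ d (x j)) = χ (x j) := hχinv d (x j)
    have hmul : χ (x i * γ d (x j)) = χ (x i) * χ (γ d (x j)) := by
      refine hχmult (a i) (b i) (a j + d) (b j + d) (hab i).1 (by have := (hab j).1; omega)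
        ?_ (x i) (hab i).2 (γ d (x j)) (hγmem d j)
      rcases hd with hd | hd
      · -- d < -R : b j + d < a i
        right
        have h1 := (hQbound i).1
        have h2 := (hQbound j).2
        have h3 := le_abs_self (b j)
        have h4 := neg_abs_le (a i)
        omega
      · -- R < d : b i < a j + d
        left
        have h1 := (hQbound i).2
        have h2 := (hQbound j).1
        have h3 := le_abs_self (b i)
        have h4 := neg_abs_le (a j)
        omega
    simp only [hgdef]
    rw [hmul, hχγ]
    ring
  -- the covariance as a finite sum over any large enough window
  have hcov : ∀ (i j : Fin m) (N : ℕ), R ≤ (N:ℤ) →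
      covT γ χ (x i) (x j) = ∑ d ∈ Finset.Icc (-(N:ℤ)) N, g i j d := by
    intro i j N hN
    refine tsum_eq_sum ?_
    intro d hd
    refine hgvan i j d ?_
    simp only [Finset.mem_Icc] at hd ⊢
    omega
  -- χ is real on self-adjoint localized elements
  have hχreal : ∀ i : Fin m, (χ (x i)).im = 0 := by
    intro i
    have hsa : star (x i) = x i := (hx i).2
    have h1 := hχpos (1 + x i)
    have h2 := hχpos (1 - x i)
    rw [star_add, star_one, hsa] at h1
    rw [star_sub, star_one, hsa] at h2
    have e1 : (1 + x i) * (1 + x i) = 1 + x i + x i + x i * x i := by noncomm_ring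
    have e2 : (1 - x i) * (1 - x i) = 1 - x i - x i + x i * x i := by noncomm_ring
    rw [e1] at h1
    rw [e2] at h2
    simp only [map_add, map_sub] at h1 h2
    rw [Complex.le_def] at h1 h2
    have i1 := h1.2
    have i2 := h2.2
    simp only [Complex.add_im, Complex.sub_im, Complex.zero_im] at i1 i2
    linarith
  have hχconj : ∀ i : Fin m, (starRingEnd ℂ) (χ (x i)) = χ (x i) := fun i =>
    Complex.conj_eq_iff_im.2 (hχreal i)
  -- centered elements
  set v : ℤ → Fin m → A := fun k j => γ k (x j) - χ (x j) • 1 with hvdef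
  have hvsa : ∀ (k : ℤ) (j : Fin m), star (v k j) = v k j := by
    intro k j
    simp only [hvdef, star_sub, star_smul, star_one]
    rw [← map_star, (hx j).2.star_eq, Complex.star_def, hχconj j]
  -- the basic product identity
  have hprod : ∀ (i j : Fin m) (k l : ℤ), χ (v k i * v l j) = g i j (l - k) := by
    intro i j k l
    have hexp : v k i * v l j
        = γ k (x i) * γ l (x j) - χ (x j) • γ k (x i) - χ (x i) • γ l (x j)
          + (χ (x i) * χ (x j)) • 1 := by
      simp only [hvdef, sub_mul, mul_sub, smul_mul_assoc, mul_smul_comm, one_mul, mul_one,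
        smul_sub, smul_smul]
      rw [mul_comm (χ (x j)) (χ (x i))]
      abel
    have hγγ : χ (γ k (x i) * γ l (x j)) = χ (x i * γ (l - k) (x j)) := by
      have : γ k (x i * γ (l - k) (x j)) = γ k (x i) * γ l (x j) := by
        have hkl : k + (l - k) = l := by ring
        rw [map_mul, ← hγadd, hkl]
      rw [← this, hχinv]
    rw [hexp]
    simp only [map_add, map_sub, map_smul, smul_eq_mul, hχ1, mul_one, hχinv]
    rw [hγγ]
    simp only [hgdef]
    ring
  -- sums
  set u : ℕ → Fin m → A := fun N j => ∑ k ∈ Finset.range N, v k j with hudef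
  have husa : ∀ (N : ℕ) (j : Fin m), star (u N j) = u N j := by
    intro N j
    simp only [hudef, star_sum]
    exact Finset.sum_congr rfl fun k _ => hvsa k j
  set z : ℕ → A := fun N => ∑ j : Fin m, c j • u N j with hzdef
  set G : Fin m → Fin m → ℕ → ℂ :=
    fun i j N => ∑ k ∈ Finset.range N, ∑ l ∈ Finset.range N, g i j ((l:ℤ) - k) with hGdef
  set S : ℕ → ℂ :=
    fun N => ∑ i : Fin m, ∑ j : Fin m, (starRingEnd ℂ) (c i) * c j * G i j N with hSdef
  -- positivity of S
  have hSpos : ∀ N : ℕ, 0 ≤ S N := by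
    intro N
    have key : χ (star (z N) * z N) = S N := by
      have hstar : star (z N) = ∑ i : Fin m, (starRingEnd ℂ) (c i) • u N i := by
        simp only [hzdef, star_sum, star_smul, RCLike.star_def]
        exact Finset.sum_congr rfl fun i _ => by rw [husa]
      rw [hstar, hzdef]
      rw [Finset.sum_mul_sum]
      rw [map_sum]
      refine Finset.sum_congr rfl fun i _ => ?_
      rw [map_sum]
      refine Finset.sum_congr rfl fun j _ => ?_
      rw [smul_mul_smul_comm, map_smul, smul_eq_mul]
      congr 1
      -- χ (u N i * u N j) = G i j N
      simp only [hudef]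
      rw [Finset.sum_mul_sum, map_sum]
      refine Finset.sum_congr rfl fun k _ => ?_
      rw [map_sum]
      exact Finset.sum_congr rfl fun l _ => hprod i j k l
    rw [← key]
    exact hχpos (z N)
  -- recursion for G
  have hGrec : ∀ (i j : Fin m) (N : ℕ), R ≤ (N:ℤ) →
      G i j (N + 1) = G i j N + covT γ χ (x i) (x j) := by
    intro i j N hN
    have step : G i j (N + 1)
        = G i j N + (∑ l ∈ Finset.range N, g i j ((l:ℤ) - N)
            + ∑ k ∈ Finset.range (N + 1), g i j ((N:ℤ) - k)) := by
      calc G i j (N + 1)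
          = ∑ k ∈ Finset.range (N + 1),
              (∑ l ∈ Finset.range N, g i j ((l:ℤ) - k) + g i j ((N:ℤ) - k)) := by
            simp only [hGdef]
            exact Finset.sum_congr rfl fun k _ => Finset.sum_range_succ _ _
        _ = ∑ k ∈ Finset.range (N + 1), ∑ l ∈ Finset.range N, g i j ((l:ℤ) - k)
              + ∑ k ∈ Finset.range (N + 1), g i j ((N:ℤ) - k) := Finset.sum_add_distrib
        _ = (∑ k ∈ Finset.range N, ∑ l ∈ Finset.range N, g i j ((l:ℤ) - k)
              + ∑ l ∈ Finset.range N, g i j ((l:ℤ) - N))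
              + ∑ k ∈ Finset.range (N + 1), g i j ((N:ℤ) - k) := by
            rw [Finset.sum_range_succ]
        _ = G i j N + (∑ l ∈ Finset.range N, g i j ((l:ℤ) - N)
              + ∑ k ∈ Finset.range (N + 1), g i j ((N:ℤ) - k)) := by
            simp only [hGdef]; ring
    rw [step, hcov i j N hN, sum_Icc_split, reindex_neg (g i j) N, reindex_pos (g i j) N]
  -- recursion for S
  set T : ℂ := ∑ i : Fin m, ∑ j : Fin m,
      (starRingEnd ℂ) (c i) * c j * covT γ χ (x i) (x j) with hTdef
  have hSrec : ∀ N : ℕ, R ≤ (N:ℤ) → S (N + 1) = S N + T := by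
    intro N hN
    simp only [hSdef, hTdef, ← Finset.sum_add_distrib]
    refine Finset.sum_congr rfl fun i _ => ?_
    refine Finset.sum_congr rfl fun j _ => ?_
    rw [hGrec i j N hN]
    ring
  -- the goal equals T
  have hgoal : (∑ i : Fin m, ∑ j : Fin m,
      (starRingEnd ℂ) (c i) * c j *
        ((sChi γ χ (x i) (x j) : ℂ) - Complex.I * (sigmaChi γ χ (x i) (x j) : ℂ))) = T := by
    simp only [hTdef]
    refine Finset.sum_congr rfl fun i _ => ?_
    refine Finset.sum_congr rfl fun j _ => ?_
    congr 1
    simp only [sChi, sigmaChi]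
    simp [Complex.ext_iff]
  rw [hgoal]
  -- conclude
  set N0 : ℕ := R.toNat with hN0def
  have hN0 : R ≤ (N0:ℤ) := by simp [hN0def]
  have hiter : ∀ n : ℕ, S (N0 + n) = S N0 + (n:ℂ) * T := by
    intro n
    induction n with
    | zero => simp
    | succ n ih =>
      have : N0 + (n + 1) = (N0 + n) + 1 := by omega
      rw [this, hSrec (N0 + n) (by push_cast; omega), ih]
      push_cast
      ring
  have hre : ∀ n : ℕ, 0 ≤ (S (N0 + n)).re ∧ (S (N0 + n)).im = 0 := by
    intro n
    have := hSpos (N0 + n)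
    rw [Complex.le_def] at this
    simpa using ⟨this.1, this.2.symm⟩
  have hTim : T.im = 0 := by
    have h0 := (hre 0).2
    have h1 := (hre 1).2
    rw [hiter 0] at h0
    rw [hiter 1] at h1
    simp only [Nat.cast_zero, Nat.cast_one, zero_mul, one_mul, add_zero,
      Complex.add_im] at h0 h1
    linarith
  have hTre : 0 ≤ T.re := by
    by_contra h
    push_neg at h
    obtain ⟨n, hn⟩ := exists_nat_gt ((S N0).re / (-T.re))
    have hn' : (S N0).re < (n:ℝ) * (-T.re) := by
      rw [div_lt_iff₀ (by linarith)] at hn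
      linarith
    have h2 := (hre n).1
    rw [hiter n] at h2
    simp only [Complex.add_re, Complex.mul_re, Complex.natCast_re, Complex.natCast_im,
      hTim, mul_zero, zero_mul, sub_zero] at h2
    nlinarith
  rw [Complex.le_def]
  constructor
  · simpa using hTre
  · simp [hTim]
end

section
/- For all x, y ∈ M₀: (i) lim_{n→∞} ‖[s^J_n(x), s^L_n(y)]‖ = 0; (ii) the sequence (‖[s^J_n(x), s^J_n(y)]‖)_{n≥1} is bounded; (iii) lim_{n→∞} ‖[s^L_n(x), s^L_n(y)]‖ = 0. -/
open Filter Topology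

open scoped ComplexOrder

/-- Number of points of the `n`-th interval `I_n = [ia n, ib n]`. -/
noncomputable def Ncard (ia ib : ℕ → ℤ) (n : ℕ) : ℕ := (Finset.Icc (ia n) (ib n)).card

/-- `p_n := ⌊|I_n|^{1/4}·log|I_n|⌋`. -/
noncomputable def pn (ia ib : ℕ → ℤ) (n : ℕ) : ℕ :=
  ⌊(Ncard ia ib n : ℝ) ^ ((1 : ℝ) / 4) * Real.log (Ncard ia ib n)⌋₊

/-- `q_n := ⌊|I_n|^{1/2} / p_n⌋`. -/
noncomputable def qn (ia ib : ℕ → ℤ) (n : ℕ) : ℕ :=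
  ⌊(Ncard ia ib n : ℝ) ^ ((1 : ℝ) / 2) / (pn ia ib n : ℝ)⌋₊

/-- `m_n := ⌊|I_n| / (p_n + q_n)⌋`. -/
noncomputable def mn (ia ib : ℕ → ℤ) (n : ℕ) : ℕ :=
  Ncard ia ib n / (pn ia ib n + qn ia ib n)

/-- The `l`-th `J`-block `J^{(n)}_l` (for `l = 1, …, m_n`): the interval of length `p_n`
starting at `ia n + (l-1)(p_n+q_n)`. -/
noncomputable def Jblock (ia ib : ℕ → ℤ) (n l : ℕ) : Finset ℤ :=
  Finset.Icc (ia n + ((l - 1) * (pn ia ib n + qn ia ib n) : ℕ))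
    (ia n + ((l - 1) * (pn ia ib n + qn ia ib n) : ℕ) + (pn ia ib n : ℕ) - 1)

/-- `J_n := ⋃_{l=1}^{m_n} J^{(n)}_l`. -/
noncomputable def Jset (ia ib : ℕ → ℤ) (n : ℕ) : Finset ℤ :=
  (Finset.Icc 1 (mn ia ib n)).biUnion (fun l => Jblock ia ib n l)

/-- `L_n := I_n \ J_n = ⋃_{l=1}^{m_n+1} L^{(n)}_l`. -/
noncomputable def Lset (ia ib : ℕ → ℤ) (n : ℕ) : Finset ℤ :=
  Finset.Icc (ia n) (ib n) \ Jset ia ib n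

/-- `s^J_n(x) := |I_n|^{-1/2} ∑_{k∈J_n} (γ_k(x) − χ(x)·1)` (set to `0` when `|I_n| < 3`). -/
noncomputable def sJ {A : Type*} [NormedRing A] [StarRing A] [NormedAlgebra ℂ A]
    [StarModule ℂ A] (γ : ℤ → A ≃⋆ₐ[ℂ] A) (χ : A →ₗ[ℂ] ℂ) (ia ib : ℕ → ℤ)
    (n : ℕ) (x : A) : A :=
  if 3 ≤ Ncard ia ib n then
    (Real.sqrt (Ncard ia ib n) : ℂ)⁻¹ • ∑ k ∈ Jset ia ib n, (γ k x - χ x • 1)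
  else 0

/-- `s^L_n(x) := |I_n|^{-1/2} ∑_{k∈L_n} (γ_k(x) − χ(x)·1)` (set to `0` when `|I_n| < 3`). -/
noncomputable def sL {A : Type*} [NormedRing A] [StarRing A] [NormedAlgebra ℂ A]
    [StarModule ℂ A] (γ : ℤ → A ≃⋆ₐ[ℂ] A) (χ : A →ₗ[ℂ] ℂ) (ia ib : ℕ → ℤ)
    (n : ℕ) (x : A) : A :=
  if 3 ≤ Ncard ia ib n then
    (Real.sqrt (Ncard ia ib n) : ℂ)⁻¹ • ∑ k ∈ Lset ia ib n, (γ k x - χ x • 1)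
  else 0


section AuxCount

variable (ia ib : ℕ → ℤ)

lemma Ncard_eq (n : ℕ) (h : ia n ≤ ib n) : (Ncard ia ib n : ℤ) = ib n - ia n + 1 := by
  rw [Ncard, Int.card_Icc]; omega

lemma Jblock_card (n l : ℕ) : (Jblock ia ib n l).card = pn ia ib n := by
  rw [Jblock, Int.card_Icc]; omega

lemma Jset_subset (n : ℕ) (h : ia n ≤ ib n) :
    Jset ia ib n ⊆ Finset.Icc (ia n) (ib n) := by
  intro k hk
  rw [Jset, Finset.mem_biUnion] at hk
  obtain ⟨l, hl, hk⟩ := hk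
  rw [Finset.mem_Icc] at hl
  rw [Jblock, Finset.mem_Icc] at hk
  have hN := Ncard_eq ia ib n h
  set p := pn ia ib n
  set q := qn ia ib n
  set m := mn ia ib n
  have h1 : (l - 1) * (p + q) + p ≤ Ncard ia ib n := by
    have h2 : (l - 1) * (p + q) + p ≤ m * (p + q) := by
      have : (l - 1) + 1 ≤ m := by omega
      calc (l - 1) * (p + q) + p ≤ (l - 1) * (p + q) + (p + q) := by omega
        _ = ((l - 1) + 1) * (p + q) := by ring
        _ ≤ m * (p + q) := Nat.mul_le_mul_right _ this
    exact h2.trans (Nat.div_mul_le_self _ _)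
  rw [Finset.mem_Icc]
  omega

lemma Jset_card (n : ℕ) : (Jset ia ib n).card = mn ia ib n * pn ia ib n := by
  rw [Jset, Finset.card_biUnion]
  · simp [Jblock_card]
  · intro l hl l' hl' hne
    rw [Finset.mem_coe, Finset.mem_Icc] at hl hl'
    have key : ∀ s t : ℕ, 1 ≤ s → s < t → Disjoint (Jblock ia ib n s) (Jblock ia ib n t) := by
      intro s t hs hst
      rw [Finset.disjoint_left]
      intro k hk hk'
      rw [Jblock, Finset.mem_Icc] at hk hk'
      set p := pn ia ib n
      set q := qn ia ib n
      have h2 : (s - 1) * (p + q) + (p + q) ≤ (t - 1) * (p + q) := by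
        calc (s - 1) * (p + q) + (p + q) = ((s - 1) + 1) * (p + q) := by ring
          _ ≤ (t - 1) * (p + q) := Nat.mul_le_mul_right _ (by omega)
      omega
    rcases lt_or_gt_of_ne hne with h | h
    · exact key l l' hl.1 h
    · exact (key l' l hl'.1 h).symm

lemma Lset_card (n : ℕ) (h : ia n ≤ ib n) :
    (Lset ia ib n).card = Ncard ia ib n - mn ia ib n * pn ia ib n := by
  rw [Lset, Finset.card_sdiff_of_subset (Jset_subset ia ib n h), Jset_card]; rfl

lemma Ncard_tendsto (hI : ∀ n, ia n ≤ ib n)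
    (hImono : ∀ n : ℕ, ia (n + 1) ≤ ia n ∧ ib n ≤ ib (n + 1))
    (hIunion : ∀ k : ℤ, ∃ n : ℕ, ia n ≤ k ∧ k ≤ ib n) :
    Tendsto (Ncard ia ib) atTop atTop := by
  have hia : Antitone ia := antitone_nat_of_succ_le (fun n => (hImono n).1)
  have hib : Monotone ib := monotone_nat_of_le_succ (fun n => (hImono n).2)
  rw [tendsto_atTop]
  intro K
  obtain ⟨n1, h1, _⟩ := hIunion (ia 0 - K)
  filter_upwards [eventually_ge_atTop n1] with n hn
  have ha : ia n ≤ ia 0 - K := le_trans (hia hn) h1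
  have hb : ia 0 ≤ ib n := by
    calc ia 0 ≤ ib 0 := hI 0
      _ ≤ ib n := hib (Nat.zero_le n)
  have : (K : ℤ) ≤ ib n - ia n + 1 := by omega
  rw [Ncard, Int.card_Icc]
  omega

end AuxCount

set_option maxHeartbeats 1000000 in
lemma ratio_bound (N p q m : ℕ) (hN : 8 ≤ N)
    (hp : p = ⌊(N:ℝ)^((1:ℝ)/4) * Real.log N⌋₊)
    (hq : q = ⌊(N:ℝ)^((1:ℝ)/2) / (p:ℝ)⌋₊)
    (hm : m = N / (p + q)) :
    ((N - m * p : ℕ) : ℝ) / N ≤ 5 * (N:ℝ) ^ (-(1:ℝ)/2) + 4 / (Real.log N)^2 := by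
  have hx8 : (8:ℝ) ≤ (N:ℝ) := by exact_mod_cast hN
  set x : ℝ := (N:ℝ) with hxdef
  have hx1 : (1:ℝ) ≤ x := by linarith
  have hxpos : (0:ℝ) < x := by linarith
  set u : ℝ := x ^ ((1:ℝ)/4) with hudef
  set s : ℝ := x ^ ((1:ℝ)/2) with hsdef
  set L : ℝ := Real.log x with hLdef
  have hu1 : (1:ℝ) ≤ u := Real.one_le_rpow hx1 (by norm_num)
  have hL2 : (2:ℝ) ≤ L := by
    rw [hLdef, Real.le_log_iff_exp_le (by linarith)]
    have h := Real.exp_one_lt_d9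
    have h2 : Real.exp 2 = Real.exp 1 * Real.exp 1 := by rw [← Real.exp_add]; norm_num
    nlinarith [Real.exp_pos 1]
  have hus : u * u = s := by rw [hudef, hsdef, ← Real.rpow_add hxpos]; norm_num
  have hss : s * s = x := by rw [hsdef, ← Real.rpow_add hxpos]; norm_num
  have hspos : (0:ℝ) < s := by nlinarith
  have hL_le : L ≤ 4 * u := by
    have := Real.log_le_rpow_div (le_of_lt hxpos) (by norm_num : (0:ℝ) < 1/4)
    rw [← hLdef, ← hudef] at this; linarith
  have ht2 : (2:ℝ) ≤ u * L := by nlinarith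
  have hp_le : (p:ℝ) ≤ u * L := by
    rw [hp]; exact Nat.floor_le (by nlinarith)
  have hp_ge : u * L - 1 < (p:ℝ) := by
    rw [hp]; exact Nat.sub_one_lt_floor _
  have hp_half : u * L / 2 ≤ (p:ℝ) := by linarith
  have hp1 : (1:ℝ) ≤ (p:ℝ) := by linarith
  have hppos : (0:ℝ) < (p:ℝ) := by linarith
  have hq_le : (q:ℝ) ≤ s / p := by
    rw [hq]; exact Nat.floor_le (by positivity)
  have hqnn : (0:ℝ) ≤ (q:ℝ) := Nat.cast_nonneg q
  have hmnn : (0:ℝ) ≤ (m:ℝ) := Nat.cast_nonneg m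
  have hm_le : (m:ℝ) * ((p:ℝ) + q) ≤ x := by
    have h0 : m * (p + q) ≤ N := hm ▸ Nat.div_mul_le_self N (p + q)
    have h1 : ((m * (p + q) : ℕ) : ℝ) ≤ (N:ℝ) := by exact_mod_cast h0
    rw [hxdef]; push_cast at h1; linarith
  have hpq1 : 1 ≤ p := by exact_mod_cast hp1
  have hcount : ((N - m * p : ℕ) : ℝ) ≤ (p:ℝ) + q + q * m := by
    have hnat : N - m * p ≤ (p + q) + q * m := by
      have e := Nat.div_add_mod N (p + q)
      rw [← hm] at e
      have e2 : (p + q) * m = p * m + q * m := by ring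
      rw [e2] at e
      have hmod : N % (p + q) < p + q := Nat.mod_lt N (by omega)
      have e3 : m * p = p * m := Nat.mul_comm m p
      rw [e3]
      set a := p * m
      set b := q * m
      omega
    calc ((N - m * p : ℕ) : ℝ) ≤ (((p + q) + q * m : ℕ) : ℝ) := by exact_mod_cast hnat
      _ = (p:ℝ) + q + q * m := by push_cast; ring
  have hxinv : s / x = 1 / s := by
    rw [div_eq_div_iff hxpos.ne' hspos.ne', one_mul]; exact hss
  have b1 : (p:ℝ) / x ≤ 4 / s := by
    have h1 : (p:ℝ) ≤ 4 * s := by nlinarith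
    calc (p:ℝ) / x ≤ (4 * s) / x := (div_le_div_iff_of_pos_right hxpos).mpr h1
      _ = 4 * (s / x) := by ring
      _ = 4 / s := by rw [hxinv]; ring
  have b2 : (q:ℝ) / x ≤ 1 / s := by
    have h1 : (q:ℝ) ≤ s := by
      calc (q:ℝ) ≤ s / p := hq_le
        _ ≤ s / 1 := div_le_div_of_nonneg_left (le_of_lt hspos) (by norm_num) hp1
        _ = s := div_one s
    calc (q:ℝ) / x ≤ s / x := (div_le_div_iff_of_pos_right hxpos).mpr h1
      _ = 1 / s := hxinv
  have b3 : (q:ℝ) * m / x ≤ 4 / L^2 := by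
    have hqp : (q:ℝ) * p ≤ s := (le_div_iff₀ hppos).mp hq_le
    have step1 : (q:ℝ) * m / x ≤ q / (p + q) := by
      rw [div_le_div_iff₀ hxpos (by linarith)]
      calc (q:ℝ) * m * (p + q) = q * (m * (p + q)) := by ring
        _ ≤ q * x := mul_le_mul_of_nonneg_left hm_le hqnn
    have step2 : (q:ℝ) / (p + q) ≤ q / p :=
      div_le_div_of_nonneg_left hqnn hppos (by linarith)
    have step3 : (q:ℝ) / p ≤ 4 / L^2 := by
      rw [div_le_div_iff₀ hppos (by nlinarith : (0:ℝ) < L^2)]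
      have hql : q * L ≤ 2 * u := by nlinarith
      nlinarith
    linarith
  have hfin : x ^ (-(1:ℝ)/2) = 1 / s := by
    rw [hsdef, one_div, ← Real.rpow_neg (le_of_lt hxpos)]; norm_num
  calc ((N - m * p : ℕ) : ℝ) / x ≤ ((p:ℝ) + q + q * m) / x :=
        (div_le_div_iff_of_pos_right hxpos).mpr hcount
    _ = (p:ℝ)/x + (q:ℝ)/x + (q:ℝ)*m/x := by ring
    _ ≤ 4 / s + 1 / s + 4 / L^2 := by linarith
    _ = 5 * (1/s) + 4 / L^2 := by ring
    _ = 5 * x ^ (-(1:ℝ)/2) + 4 / L^2 := by rw [hfin]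

lemma g_tendsto : Tendsto (fun N : ℕ => 5 * (N:ℝ) ^ (-(1:ℝ)/2) + 4 / (Real.log N)^2)
    atTop (𝓝 0) := by
  have h1 : Tendsto (fun N : ℕ => 5 * (N:ℝ) ^ (-(1:ℝ)/2)) atTop (𝓝 0) := by
    have h0 : Tendsto (fun N : ℕ => ((N:ℝ)) ^ (-((1:ℝ)/2))) atTop (𝓝 0) :=
      (tendsto_rpow_neg_atTop (by norm_num : (0:ℝ) < 1/2)).comp
        (tendsto_natCast_atTop_atTop (R := ℝ))
    have h := h0.const_mul (5:ℝ)
    simp only [mul_zero] at h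
    convert h using 2 with N
    norm_num
  have h2 : Tendsto (fun N : ℕ => 4 / (Real.log N)^2) atTop (𝓝 0) := by
    have hl0 : Tendsto (fun N : ℕ => Real.log N) atTop atTop :=
      Real.tendsto_log_atTop.comp (tendsto_natCast_atTop_atTop (R := ℝ))
    have hl : Tendsto (fun N : ℕ => (Real.log N)^2) atTop atTop := by
      have := hl0.atTop_mul_atTop₀ hl0
      simpa [pow_two] using this
    simpa [div_eq_mul_inv] using hl.inv_tendsto_atTop.const_mul (4:ℝ)
  simpa using h1.add h2

lemma ratio_tendsto (ia ib : ℕ → ℤ) (hI : ∀ n, ia n ≤ ib n)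
    (hImono : ∀ n : ℕ, ia (n + 1) ≤ ia n ∧ ib n ≤ ib (n + 1))
    (hIunion : ∀ k : ℤ, ∃ n : ℕ, ia n ≤ k ∧ k ≤ ib n) :
    Tendsto (fun n => ((Lset ia ib n).card : ℝ) / (Ncard ia ib n : ℝ)) atTop (𝓝 0) := by
  have hNt : Tendsto (Ncard ia ib) atTop atTop := Ncard_tendsto ia ib hI hImono hIunion
  have hupper : Tendsto (fun n => 5 * (Ncard ia ib n : ℝ) ^ (-(1:ℝ)/2) +
      4 / (Real.log (Ncard ia ib n))^2) atTop (𝓝 0) := g_tendsto.comp hNt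
  refine squeeze_zero' (Eventually.of_forall fun n => by positivity) ?_ hupper
  filter_upwards [hNt.eventually (eventually_ge_atTop 8)] with n hn
  rw [Lset_card ia ib n (hI n)]
  exact ratio_bound (Ncard ia ib n) (pn ia ib n) (qn ia ib n) (mn ia ib n) hn rfl rfl rfl

section AuxNorm

variable {A : Type*} [NormedRing A] [StarRing A] [CStarRing A] [NormedAlgebra ℂ A]
    [CompleteSpace A] [StarModule ℂ A]

lemma my_norm_map (φ : A ≃⋆ₐ[ℂ] A) (x : A) : ‖φ x‖ = ‖x‖ := by
  letI : CStarAlgebra A :=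
    { ‹NormedRing A›, ‹StarRing A›, ‹CompleteSpace A›, ‹CStarRing A›,
      ‹NormedAlgebra ℂ A›, ‹StarModule ℂ A› with }
  exact StarAlgEquiv.norm_map φ x

omit [StarRing A] [CStarRing A] [CompleteSpace A] [StarModule ℂ A] in
lemma prime_comm_eq (u v : A) (α β : ℂ) :
    (u - α • 1) * (v - β • 1) - (v - β • 1) * (u - α • 1) = u * v - v * u := by
  simp only [sub_mul, mul_sub, smul_mul_assoc, mul_smul_comm, one_mul, mul_one, smul_sub,
    smul_smul, mul_comm β α]
  abel

omit [StarRing A] [CStarRing A] [CompleteSpace A] [StarModule ℂ A] in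
lemma sum_comm_bound (u v : ℤ → A) (K₀ : ℝ)
    (hb : ∀ j k : ℤ, ‖u j * v k - v k * u j‖ ≤ K₀)
    (E : Finset ℤ) (hc : ∀ j k : ℤ, k - j ∉ E → u j * v k = v k * u j)
    (S T : Finset ℤ) :
    ‖∑ j ∈ S, ∑ k ∈ T, (u j * v k - v k * u j)‖ ≤ (T.card : ℝ) * E.card * K₀ := by
  have hK₀ : 0 ≤ K₀ := le_trans (norm_nonneg _) (hb 0 0)
  rw [Finset.sum_comm]
  calc ‖∑ k ∈ T, ∑ j ∈ S, (u j * v k - v k * u j)‖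
      ≤ ∑ k ∈ T, ‖∑ j ∈ S, (u j * v k - v k * u j)‖ := norm_sum_le _ _
    _ ≤ ∑ _k ∈ T, ((E.card : ℝ) * K₀) := by
        refine Finset.sum_le_sum fun k _ => ?_
        rw [← Finset.sum_filter_of_ne (p := fun j => k - j ∈ E)
          (fun j _ hne => by by_contra h; exact hne (by rw [hc j k h, sub_self]))]
        calc ‖∑ j ∈ S.filter (fun j => k - j ∈ E), (u j * v k - v k * u j)‖
            ≤ ∑ j ∈ S.filter (fun j => k - j ∈ E), ‖u j * v k - v k * u j‖ := norm_sum_le _ _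
          _ ≤ ∑ _j ∈ S.filter (fun j => k - j ∈ E), K₀ :=
              Finset.sum_le_sum fun j _ => hb j k
          _ = ((S.filter (fun j => k - j ∈ E)).card : ℝ) * K₀ := by
              rw [Finset.sum_const, nsmul_eq_mul]
          _ ≤ (E.card : ℝ) * K₀ := by
              refine mul_le_mul_of_nonneg_right ?_ hK₀
              have : (S.filter (fun j => k - j ∈ E)).card ≤ E.card := by
                apply Finset.card_le_card_of_injOn (fun j => k - j)
                · intro j hj; exact (Finset.mem_filter.mp hj).2
                · intro j1 _ j2 _ h; have h2 : k - j1 = k - j2 := h; omega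
              exact_mod_cast this
    _ = (T.card : ℝ) * E.card * K₀ := by rw [Finset.sum_const, nsmul_eq_mul]; ring

omit [StarRing A] [CStarRing A] [CompleteSpace A] [StarModule ℂ A] in
lemma comm_identity (u v : ℤ → A) (α β : ℂ) (S T : Finset ℤ) :
    (∑ j ∈ S, (u j - α • 1)) * (∑ k ∈ T, (v k - β • 1)) -
      (∑ k ∈ T, (v k - β • 1)) * (∑ j ∈ S, (u j - α • 1)) =
    ∑ j ∈ S, ∑ k ∈ T, (u j * v k - v k * u j) := by
  rw [Finset.sum_mul_sum, Finset.sum_mul_sum, Finset.sum_comm (s := T)]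
  rw [← Finset.sum_sub_distrib]
  refine Finset.sum_congr rfl fun j _ => ?_
  rw [← Finset.sum_sub_distrib]
  exact Finset.sum_congr rfl fun k _ => prime_comm_eq (u j) (v k) α β

lemma master (M : ℤ → ℤ → Subalgebra ℂ A)
    (hcomm : ∀ a b c d : ℤ, a ≤ b → c ≤ d → (b < c ∨ d < a) →
      ∀ x ∈ M a b, ∀ y ∈ M c d, x * y = y * x)
    (γ : ℤ → A ≃⋆ₐ[ℂ] A)
    (hγM : ∀ j a b : ℤ, a ≤ b → ⇑(γ j) '' (M a b : Set A) = (M (a + j) (b + j) : Set A))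
    (χ : A →ₗ[ℂ] ℂ)
    (x y : A) (a b c d : ℤ) (hab : a ≤ b) (hcd : c ≤ d)
    (hx : x ∈ M a b) (hy : y ∈ M c d)
    (N : ℕ) (S T : Finset ℤ) :
    ‖((Real.sqrt N : ℂ)⁻¹ • ∑ j ∈ S, (γ j x - χ x • 1)) *
        ((Real.sqrt N : ℂ)⁻¹ • ∑ k ∈ T, (γ k y - χ y • 1)) -
      ((Real.sqrt N : ℂ)⁻¹ • ∑ k ∈ T, (γ k y - χ y • 1)) *
        ((Real.sqrt N : ℂ)⁻¹ • ∑ j ∈ S, (γ j x - χ x • 1))‖ ≤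
    (T.card : ℝ) * ((Finset.Icc (a - d) (b - c)).card) * (2 * ‖x‖ * ‖y‖) / N := by
  set c0 : ℂ := ((Real.sqrt N : ℝ) : ℂ)⁻¹ with hc0
  have e1 : (c0 • ∑ j ∈ S, (γ j x - χ x • 1)) * (c0 • ∑ k ∈ T, (γ k y - χ y • 1)) -
      (c0 • ∑ k ∈ T, (γ k y - χ y • 1)) * (c0 • ∑ j ∈ S, (γ j x - χ x • 1)) =
      (c0 * c0) • (∑ j ∈ S, ∑ k ∈ T, (γ j x * γ k y - γ k y * γ j x)) := by
    rw [smul_mul_smul_comm, smul_mul_smul_comm, ← smul_sub,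
      comm_identity (fun j => γ j x) (fun k => γ k y) (χ x) (χ y) S T]
  rw [e1, norm_smul]
  have hnc0 : ‖c0 * c0‖ = ((N:ℝ))⁻¹ := by
    rw [norm_mul, hc0, norm_inv, Complex.norm_real, Real.norm_eq_abs,
      abs_of_nonneg (Real.sqrt_nonneg _), ← mul_inv, Real.mul_self_sqrt (Nat.cast_nonneg N)]
  rw [hnc0]
  have hsum : ‖∑ j ∈ S, ∑ k ∈ T, (γ j x * γ k y - γ k y * γ j x)‖ ≤
      (T.card : ℝ) * ((Finset.Icc (a - d) (b - c)).card) * (2 * ‖x‖ * ‖y‖) := by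
    apply sum_comm_bound
    · intro j k
      calc ‖γ j x * γ k y - γ k y * γ j x‖ ≤ ‖γ j x * γ k y‖ + ‖γ k y * γ j x‖ :=
            norm_sub_le _ _
        _ ≤ ‖γ j x‖ * ‖γ k y‖ + ‖γ k y‖ * ‖γ j x‖ :=
            add_le_add (norm_mul_le _ _) (norm_mul_le _ _)
        _ = 2 * ‖x‖ * ‖y‖ := by rw [my_norm_map, my_norm_map]; ring
    · intro j k hjk
      rw [Finset.mem_Icc] at hjk
      push_neg at hjk
      have h1 : γ j x ∈ (M (a + j) (b + j) : Set A) := by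
        rw [← hγM j a b hab]; exact ⟨x, hx, rfl⟩
      have h2 : γ k y ∈ (M (c + k) (d + k) : Set A) := by
        rw [← hγM k c d hcd]; exact ⟨y, hy, rfl⟩
      apply hcomm (a + j) (b + j) (c + k) (d + k) (by linarith) (by linarith) _ _ h1 _ h2
      by_cases hcase : a - d ≤ k - j
      · left; have := hjk hcase; omega
      · right; omega
  calc ((N:ℝ))⁻¹ * ‖∑ j ∈ S, ∑ k ∈ T, (γ j x * γ k y - γ k y * γ j x)‖
      ≤ ((N:ℝ))⁻¹ * ((T.card : ℝ) * ((Finset.Icc (a - d) (b - c)).card) * (2 * ‖x‖ * ‖y‖)) :=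
        mul_le_mul_of_nonneg_left hsum (by positivity)
    _ = (T.card : ℝ) * ((Finset.Icc (a - d) (b - c)).card) * (2 * ‖x‖ * ‖y‖) / N := by
        ring

end AuxNorm

theorem sJ_sL_commutator_limits
    {A : Type*} [NormedRing A] [StarRing A] [CStarRing A] [NormedAlgebra ℂ A]
    [CompleteSpace A] [StarModule ℂ A]
    (M : ℤ → ℤ → Subalgebra ℂ A)
    (hmono : ∀ a b c d : ℤ, a ≤ b → c ≤ a → b ≤ d → M a b ≤ M c d)
    (hdense : Dense {x : A | ∃ a b : ℤ, a ≤ b ∧ x ∈ M a b})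
    (hcomm : ∀ a b c d : ℤ, a ≤ b → c ≤ d → (b < c ∨ d < a) →
      ∀ x ∈ M a b, ∀ y ∈ M c d, x * y = y * x)
    (γ : ℤ → A ≃⋆ₐ[ℂ] A)
    (hγ0 : ∀ x : A, γ 0 x = x)
    (hγadd : ∀ j k : ℤ, ∀ x : A, γ (j + k) x = γ j (γ k x))
    (hγM : ∀ j a b : ℤ, a ≤ b → ⇑(γ j) '' (M a b : Set A) = (M (a + j) (b + j) : Set A))
    (χ : A →ₗ[ℂ] ℂ)
    (hχ1 : χ 1 = 1)
    (hχpos : ∀ x : A, 0 ≤ χ (star x * x))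
    (hχinv : ∀ j : ℤ, ∀ x : A, χ (γ j x) = χ x)
    (hχmult : ∀ a b c d : ℤ, a ≤ b → c ≤ d → (b < c ∨ d < a) →
      ∀ x ∈ M a b, ∀ y ∈ M c d, χ (x * y) = χ x * χ y)
    (ia ib : ℕ → ℤ)
    (hI : ∀ n : ℕ, ia n ≤ ib n)
    (hImono : ∀ n : ℕ, ia (n + 1) ≤ ia n ∧ ib n ≤ ib (n + 1))
    (hIunion : ∀ k : ℤ, ∃ n : ℕ, ia n ≤ k ∧ k ≤ ib n)
    (x y : A)
    (hx : ∃ a b : ℤ, a ≤ b ∧ x ∈ M a b)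
    (hy : ∃ a b : ℤ, a ≤ b ∧ y ∈ M a b) :
    Tendsto (fun n : ℕ =>
        ‖sJ γ χ ia ib n x * sL γ χ ia ib n y - sL γ χ ia ib n y * sJ γ χ ia ib n x‖)
        atTop (𝓝 0) ∧
      (∃ C : ℝ, ∀ n : ℕ,
        ‖sJ γ χ ia ib n x * sJ γ χ ia ib n y - sJ γ χ ia ib n y * sJ γ χ ia ib n x‖ ≤ C) ∧
      Tendsto (fun n : ℕ =>
        ‖sL γ χ ia ib n x * sL γ χ ia ib n y - sL γ χ ia ib n y * sL γ χ ia ib n x‖)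
        atTop (𝓝 0) := by
  obtain ⟨a, b, hab, hxM⟩ := hx
  obtain ⟨c, d, hcd, hyM⟩ := hy
  have hmain := master M hcomm γ hγM χ x y a b c d hab hcd hxM hyM
  set Ec : ℝ := ((Finset.Icc (a - d) (b - c)).card : ℝ) with hEcdef
  have hEc : 0 ≤ Ec := Nat.cast_nonneg _
  set K : ℝ := 2 * ‖x‖ * ‖y‖ with hKdef
  have hK : 0 ≤ K := by positivity
  have hNt : Tendsto (Ncard ia ib) atTop atTop := Ncard_tendsto ia ib hI hImono hIunion
  have hRatio := ratio_tendsto ia ib hI hImono hIunion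
  have hupper : Tendsto (fun n => Ec * K * (((Lset ia ib n).card : ℝ) / (Ncard ia ib n : ℝ)))
      atTop (𝓝 0) := by simpa using hRatio.const_mul (Ec * K)
  refine ⟨?_, ?_, ?_⟩
  · refine squeeze_zero' (Eventually.of_forall fun n => norm_nonneg _) ?_ hupper
    filter_upwards [hNt.eventually (eventually_ge_atTop 3)] with n h3
    have hb := hmain (Ncard ia ib n) (Jset ia ib n) (Lset ia ib n)
    simp only [sJ, sL, if_pos h3]
    refine le_trans hb (le_of_eq ?_)
    rw [hEcdef, hKdef]; ring
  · refine ⟨Ec * K, fun n => ?_⟩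
    by_cases h3 : 3 ≤ Ncard ia ib n
    · have hb := hmain (Ncard ia ib n) (Jset ia ib n) (Jset ia ib n)
      simp only [sJ, if_pos h3]
      refine le_trans hb ?_
      have hJle : ((Jset ia ib n).card : ℝ) ≤ (Ncard ia ib n : ℝ) := by
        have := Finset.card_le_card (Jset_subset ia ib n (hI n))
        exact_mod_cast this
      have hN0 : (0:ℝ) < (Ncard ia ib n : ℝ) := by
        have : (3:ℝ) ≤ (Ncard ia ib n : ℝ) := by exact_mod_cast h3
        linarith
      rw [div_le_iff₀ hN0]
      nlinarith [mul_le_mul_of_nonneg_right hJle (mul_nonneg hEc hK)]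
    · simp only [sJ, if_neg h3]
      simp only [mul_zero, zero_mul, sub_zero, norm_zero]
      positivity
  · refine squeeze_zero' (Eventually.of_forall fun n => norm_nonneg _) ?_ hupper
    filter_upwards [hNt.eventually (eventually_ge_atTop 3)] with n h3
    have hb := hmain (Ncard ia ib n) (Lset ia ib n) (Lset ia ib n)
    simp only [sL, if_pos h3]
    refine le_trans hb (le_of_eq ?_)
    rw [hEcdef, hKdef]; ring
end

section
/- For all x, y, z ∈ M₀ one has lim_{n→∞} ‖[s^L_n(x), [s^J_n(y), s^J_n(z)]]‖ = 0. -/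
open Filter Topology

open scoped ComplexOrder

lemma Jset_card_le (ia ib : ℕ → ℤ) (n : ℕ) : (Jset ia ib n).card ≤ Ncard ia ib n := by
  unfold Jset
  calc ((Finset.Icc 1 (mn ia ib n)).biUnion (fun l => Jblock ia ib n l)).card
      ≤ ∑ l ∈ Finset.Icc 1 (mn ia ib n), (Jblock ia ib n l).card := Finset.card_biUnion_le
    _ ≤ ∑ _l ∈ Finset.Icc 1 (mn ia ib n), pn ia ib n := by
        refine Finset.sum_le_sum fun l _ => ?_
        unfold Jblock
        rw [Int.card_Icc]
        omega
    _ = mn ia ib n * pn ia ib n := by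
        rw [Finset.sum_const, Nat.card_Icc, smul_eq_mul, Nat.add_sub_cancel]
    _ ≤ mn ia ib n * (pn ia ib n + qn ia ib n) := Nat.mul_le_mul_left _ (Nat.le_add_right _ _)
    _ ≤ Ncard ia ib n := Nat.div_mul_le_self _ _

lemma sqrt_tendsto_atTop' : Tendsto Real.sqrt atTop atTop := by
  apply tendsto_atTop_atTop_of_monotone (fun a b h => Real.sqrt_le_sqrt h)
  intro b
  exact ⟨(max b 0) ^ 2, by rw [Real.sqrt_sq (le_max_right _ _)]; exact le_max_left _ _⟩

lemma commute_sub_smul_one {A : Type*} [Ring A] [Algebra ℂ A] (a b : A) (s t : ℂ)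
    (h : Commute a b) : Commute (a - s • 1) (b - t • 1) :=
  (h.sub_right ((Commute.one_right a).smul_right t)).sub_left
    (((Commute.one_left b).smul_left s).sub_right
      (((Commute.refl (1 : A)).smul_left s).smul_right t))

lemma triple_smul_pull {A : Type*} [Ring A] [Algebra ℂ A] (c : ℂ) (SL SY SZ : A) :
    (c • SL) * ((c • SY) * (c • SZ) - (c • SZ) * (c • SY)) -
      ((c • SY) * (c • SZ) - (c • SZ) * (c • SY)) * (c • SL) =
    (c * c * c) • (SL * (SY * SZ - SZ * SY) - (SY * SZ - SZ * SY) * SL) := by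
  simp only [smul_mul_assoc, mul_smul_comm, smul_sub, smul_smul, mul_sub, sub_mul]
  ring_nf

lemma triple_sum_expand {A : Type*} [Ring A] (L J : Finset ℤ) (Fx Fy Fz : ℤ → A) :
    (∑ k ∈ L, Fx k) * ((∑ j ∈ J, Fy j) * (∑ j ∈ J, Fz j) -
        (∑ j ∈ J, Fz j) * (∑ j ∈ J, Fy j)) -
      ((∑ j ∈ J, Fy j) * (∑ j ∈ J, Fz j) - (∑ j ∈ J, Fz j) * (∑ j ∈ J, Fy j)) *
        (∑ k ∈ L, Fx k)
    = ∑ k ∈ L, ∑ j ∈ J, ∑ j' ∈ J,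
        (Fx k * (Fy j * Fz j' - Fz j' * Fy j) - (Fy j * Fz j' - Fz j' * Fy j) * Fx k) := by
  have hW : (∑ j ∈ J, Fy j) * (∑ j ∈ J, Fz j) - (∑ j ∈ J, Fz j) * (∑ j ∈ J, Fy j)
      = ∑ j ∈ J, ∑ j' ∈ J, (Fy j * Fz j' - Fz j' * Fy j) := by
    rw [Finset.sum_mul_sum, Finset.sum_mul_sum,
      Finset.sum_comm (s := J) (t := J) (f := fun j j' => Fz j * Fy j')]
    simp [Finset.sum_sub_distrib]
  rw [hW, Finset.sum_mul, Finset.mul_sum, ← Finset.sum_sub_distrib]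
  refine Finset.sum_congr rfl fun k _ => ?_
  rw [Finset.sum_mul, Finset.mul_sum, ← Finset.sum_sub_distrib]
  refine Finset.sum_congr rfl fun j _ => ?_
  rw [Finset.sum_mul, Finset.mul_sum, ← Finset.sum_sub_distrib]


theorem sL_double_commutator_limit
    {A : Type*} [NormedRing A] [StarRing A] [CStarRing A] [NormedAlgebra ℂ A]
    [CompleteSpace A] [StarModule ℂ A]
    (M : ℤ → ℤ → Subalgebra ℂ A)
    (hmono : ∀ a b c d : ℤ, a ≤ b → c ≤ a → b ≤ d → M a b ≤ M c d)
    (hdense : Dense {x : A | ∃ a b : ℤ, a ≤ b ∧ x ∈ M a b})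
    (hcomm : ∀ a b c d : ℤ, a ≤ b → c ≤ d → (b < c ∨ d < a) →
      ∀ x ∈ M a b, ∀ y ∈ M c d, x * y = y * x)
    (γ : ℤ → A ≃⋆ₐ[ℂ] A)
    (hγ0 : ∀ x : A, γ 0 x = x)
    (hγadd : ∀ j k : ℤ, ∀ x : A, γ (j + k) x = γ j (γ k x))
    (hγM : ∀ j a b : ℤ, a ≤ b → ⇑(γ j) '' (M a b : Set A) = (M (a + j) (b + j) : Set A))
    (χ : A →ₗ[ℂ] ℂ)
    (hχ1 : χ 1 = 1)
    (hχpos : ∀ x : A, 0 ≤ χ (star x * x))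
    (hχinv : ∀ j : ℤ, ∀ x : A, χ (γ j x) = χ x)
    (hχmult : ∀ a b c d : ℤ, a ≤ b → c ≤ d → (b < c ∨ d < a) →
      ∀ x ∈ M a b, ∀ y ∈ M c d, χ (x * y) = χ x * χ y)
    (ia ib : ℕ → ℤ)
    (hI : ∀ n : ℕ, ia n ≤ ib n)
    (hImono : ∀ n : ℕ, ia (n + 1) ≤ ia n ∧ ib n ≤ ib (n + 1))
    (hIunion : ∀ k : ℤ, ∃ n : ℕ, ia n ≤ k ∧ k ≤ ib n)
    (x y z : A)
    (hx : ∃ a b : ℤ, a ≤ b ∧ x ∈ M a b)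
    (hy : ∃ a b : ℤ, a ≤ b ∧ y ∈ M a b)
    (hz : ∃ a b : ℤ, a ≤ b ∧ z ∈ M a b) :
    Tendsto (fun n : ℕ =>
      ‖sL γ χ ia ib n x *
          (sJ γ χ ia ib n y * sJ γ χ ia ib n z - sJ γ χ ia ib n z * sJ γ χ ia ib n y) -
        (sJ γ χ ia ib n y * sJ γ χ ia ib n z - sJ γ χ ia ib n z * sJ γ χ ia ib n y) *
          sL γ χ ia ib n x‖) atTop (𝓝 0) := by
  classical
  obtain ⟨ax, bx, haxbx, hxM⟩ := hx
  obtain ⟨ay, cy, haycy, hyM⟩ := hy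
  obtain ⟨az, bz, hazbz, hzM⟩ := hz
  set R : ℤ := max (max (|ax| ⊔ |bx|) (|ay| ⊔ |cy|)) (|az| ⊔ |bz|) with hRdef
  have hR0 : (0:ℤ) ≤ R := le_trans (abs_nonneg ax) (by
    calc |ax| ≤ |ax| ⊔ |bx| := le_max_left _ _
      _ ≤ max (|ax| ⊔ |bx|) (|ay| ⊔ |cy|) := le_max_left _ _
      _ ≤ R := le_max_left _ _)
  have hRR : (-R : ℤ) ≤ R := by linarith
  have hxR : x ∈ M (-R) R := by
    refine hmono ax bx (-R) R haxbx ?_ ?_ hxM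
    · have : |ax| ≤ R := le_trans (le_trans (le_max_left _ _) (le_max_left _ _)) (le_max_left _ _)
      cases abs_le.mp this; omega
    · have : |bx| ≤ R := le_trans (le_trans (le_max_right _ _) (le_max_left _ _)) (le_max_left _ _)
      cases abs_le.mp this; omega
  have hyR : y ∈ M (-R) R := by
    refine hmono ay cy (-R) R haycy ?_ ?_ hyM
    · have : |ay| ≤ R := le_trans (le_trans (le_max_left _ _) (le_max_right _ _)) (le_max_left _ _)
      cases abs_le.mp this; omega
    · have : |cy| ≤ R := le_trans (le_trans (le_max_right _ _) (le_max_right _ _)) (le_max_left _ _)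
      cases abs_le.mp this; omega
  have hzR : z ∈ M (-R) R := by
    refine hmono az bz (-R) R hazbz ?_ ?_ hzM
    · have : |az| ≤ R := le_trans (le_max_left _ _) (le_max_right _ _)
      cases abs_le.mp this; omega
    · have : |bz| ≤ R := le_trans (le_max_right _ _) (le_max_right _ _)
      cases abs_le.mp this; omega
  letI : CStarAlgebra A := {}
  have hnorm : ∀ (j : ℤ) (w : A), ‖γ j w‖ = ‖w‖ := fun j w => StarAlgEquiv.norm_map (γ j) w
  set Fx : ℤ → A := fun k => γ k x - χ x • 1 with hFxdef
  set Fy : ℤ → A := fun k => γ k y - χ y • 1 with hFydef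
  set Fz : ℤ → A := fun k => γ k z - χ z • 1 with hFzdef
  -- commutation criterion
  have hmem : ∀ (w : A), w ∈ M (-R) R → ∀ k : ℤ, γ k w ∈ M (-R + k) (R + k) := by
    intro w hw k
    have himg : ⇑(γ k) '' (M (-R) R : Set A) = (M (-R + k) (R + k) : Set A) := hγM k (-R) R hRR
    have : γ k w ∈ (M (-R + k) (R + k) : Set A) := by
      rw [← himg]; exact ⟨w, hw, rfl⟩
    exact this
  have hcommF : ∀ (w v : A), w ∈ M (-R) R → v ∈ M (-R) R → ∀ k j : ℤ, 2*R < |j - k| →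
      Commute (γ k w - χ w • 1) (γ j v - χ v • 1) := by
    intro w v hw hv k j hkj
    have h1 := hmem w hw k
    have h2 := hmem v hv j
    have hc : γ k w * γ j v = γ j v * γ k w := by
      refine hcomm (-R + k) (R + k) (-R + j) (R + j) (by linarith) (by linarith) ?_ _ h1 _ h2
      rcases lt_abs.mp hkj with h | h
      · left; linarith
      · right; linarith
    exact commute_sub_smul_one _ _ _ _ hc
  set G : ℤ → ℤ → ℤ → A := fun k j j' =>
    Fx k * (Fy j * Fz j' - Fz j' * Fy j) - (Fy j * Fz j' - Fz j' * Fy j) * Fx k with hGdef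
  have hGyz : ∀ k j j', 2*R < |j' - j| → G k j j' = 0 := by
    intro k j j' h
    have hc : Fy j * Fz j' = Fz j' * Fy j := (hcommF y z hyR hzR j j' h).eq
    simp [hGdef, hc]
  have hGx : ∀ k j j', 2*R < |j - k| → 2*R < |j' - k| → G k j j' = 0 := by
    intro k j j' h1 h2
    have c1 : Commute (Fx k) (Fy j) := hcommF x y hxR hyR k j h1
    have c2 : Commute (Fx k) (Fz j') := hcommF x z hxR hzR k j' h2
    have hc : Commute (Fx k) (Fy j * Fz j' - Fz j' * Fy j) :=
      (c1.mul_right c2).sub_right (c2.mul_right c1)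
    simpa [hGdef, sub_eq_zero] using hc.eq
  -- norm bounds
  set Bx : ℝ := ‖x‖ + ‖χ x‖ * ‖(1:A)‖ with hBxdef
  set By : ℝ := ‖y‖ + ‖χ y‖ * ‖(1:A)‖ with hBydef
  set Bz : ℝ := ‖z‖ + ‖χ z‖ * ‖(1:A)‖ with hBzdef
  have hFxB : ∀ k, ‖Fx k‖ ≤ Bx := fun k => by
    calc ‖γ k x - χ x • (1:A)‖ ≤ ‖γ k x‖ + ‖χ x • (1:A)‖ := norm_sub_le _ _
      _ = Bx := by rw [hnorm, norm_smul, hBxdef]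
  have hFyB : ∀ k, ‖Fy k‖ ≤ By := fun k => by
    calc ‖γ k y - χ y • (1:A)‖ ≤ ‖γ k y‖ + ‖χ y • (1:A)‖ := norm_sub_le _ _
      _ = By := by rw [hnorm, norm_smul, hBydef]
  have hFzB : ∀ k, ‖Fz k‖ ≤ Bz := fun k => by
    calc ‖γ k z - χ z • (1:A)‖ ≤ ‖γ k z‖ + ‖χ z • (1:A)‖ := norm_sub_le _ _
      _ = Bz := by rw [hnorm, norm_smul, hBzdef]
  have hBx0 : 0 ≤ Bx := le_trans (norm_nonneg _) (hFxB 0)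
  have hBy0 : 0 ≤ By := le_trans (norm_nonneg _) (hFyB 0)
  have hBz0 : 0 ≤ Bz := le_trans (norm_nonneg _) (hFzB 0)
  set B8 : ℝ := 4 * (Bx * (By * Bz)) with hB8def
  have hB80 : 0 ≤ B8 := by positivity
  have hGB : ∀ k j j', ‖G k j j'‖ ≤ B8 := by
    intro k j j'
    have hw : ‖Fy j * Fz j' - Fz j' * Fy j‖ ≤ 2 * (By * Bz) := by
      calc ‖Fy j * Fz j' - Fz j' * Fy j‖ ≤ ‖Fy j * Fz j'‖ + ‖Fz j' * Fy j‖ := norm_sub_le _ _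
        _ ≤ ‖Fy j‖ * ‖Fz j'‖ + ‖Fz j'‖ * ‖Fy j‖ := add_le_add (norm_mul_le _ _) (norm_mul_le _ _)
        _ ≤ By * Bz + Bz * By :=
            add_le_add (mul_le_mul (hFyB j) (hFzB j') (norm_nonneg _) hBy0)
              (mul_le_mul (hFzB j') (hFyB j) (norm_nonneg _) hBz0)
        _ = 2 * (By * Bz) := by ring
    calc ‖G k j j'‖ ≤ ‖Fx k * (Fy j * Fz j' - Fz j' * Fy j)‖ +
          ‖(Fy j * Fz j' - Fz j' * Fy j) * Fx k‖ := norm_sub_le _ _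
      _ ≤ ‖Fx k‖ * ‖Fy j * Fz j' - Fz j' * Fy j‖ + ‖Fy j * Fz j' - Fz j' * Fy j‖ * ‖Fx k‖ :=
          add_le_add (norm_mul_le _ _) (norm_mul_le _ _)
      _ ≤ Bx * (2 * (By * Bz)) + (2 * (By * Bz)) * Bx :=
          add_le_add (mul_le_mul (hFxB k) hw (norm_nonneg _) hBx0)
            (mul_le_mul hw (hFxB k) (norm_nonneg _) (by positivity))
      _ = B8 := by rw [hB8def]; ring
  set K : ℕ := (4*R + 1).toNat with hKdef
  set C1 : ℝ := (K : ℝ) * ((2*K : ℕ) * B8) with hC1def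
  -- pointwise bound
  have key : ∀ n : ℕ, 3 ≤ Ncard ia ib n →
      ‖sL γ χ ia ib n x *
          (sJ γ χ ia ib n y * sJ γ χ ia ib n z - sJ γ χ ia ib n z * sJ γ χ ia ib n y) -
        (sJ γ χ ia ib n y * sJ γ χ ia ib n z - sJ γ χ ia ib n z * sJ γ χ ia ib n y) *
          sL γ χ ia ib n x‖ ≤ C1 / Real.sqrt (Ncard ia ib n) := by
    intro n hn
    have eL : sL γ χ ia ib n x
        = ((Real.sqrt (Ncard ia ib n) : ℝ) : ℂ)⁻¹ • ∑ k ∈ Lset ia ib n, Fx k := by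
      unfold sL; rw [if_pos hn]
    have eJy : sJ γ χ ia ib n y
        = ((Real.sqrt (Ncard ia ib n) : ℝ) : ℂ)⁻¹ • ∑ k ∈ Jset ia ib n, Fy k := by
      unfold sJ; rw [if_pos hn]
    have eJz : sJ γ χ ia ib n z
        = ((Real.sqrt (Ncard ia ib n) : ℝ) : ℂ)⁻¹ • ∑ k ∈ Jset ia ib n, Fz k := by
      unfold sJ; rw [if_pos hn]
    rw [eL, eJy, eJz, triple_smul_pull, triple_sum_expand, norm_smul, norm_mul, norm_mul]
    set s : ℝ := Real.sqrt (Ncard ia ib n) with hs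
    have hN3 : (3:ℝ) ≤ (Ncard ia ib n : ℝ) := by exact_mod_cast hn
    have hspos : 0 < s := Real.sqrt_pos.mpr (by linarith)
    have hss : s * s = (Ncard ia ib n : ℝ) := Real.mul_self_sqrt (by linarith)
    have hcn : ‖((s : ℝ) : ℂ)⁻¹‖ = s⁻¹ := by
      rw [norm_inv, Complex.norm_real, Real.norm_eq_abs, abs_of_nonneg hspos.le]
    rw [hcn]
    -- counting bound on the big sum
    have hC10 : 0 ≤ C1 := by
      rw [hC1def]; positivity
    have hV : ∀ j j' : ℤ, ∑ k ∈ Lset ia ib n, ‖G k j j'‖ ≤ (2*K : ℕ) * B8 := by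
      intro j j'
      have hfil : ∑ k ∈ (Lset ia ib n).filter
            (fun k => |j - k| ≤ 2*R ∨ |j' - k| ≤ 2*R), ‖G k j j'‖
          = ∑ k ∈ Lset ia ib n, ‖G k j j'‖ := by
        refine Finset.sum_filter_of_ne fun k _ hne => ?_
        by_contra hp
        push_neg at hp
        exact hne (by rw [hGx k j j' hp.1 hp.2, norm_zero])
      rw [← hfil]
      refine le_trans (Finset.sum_le_card_nsmul _ _ B8 (fun k _ => hGB k j j')) ?_
      rw [nsmul_eq_mul]
      have hsub : (Lset ia ib n).filter (fun k => |j - k| ≤ 2*R ∨ |j' - k| ≤ 2*R)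
          ⊆ Finset.Icc (j - 2*R) (j + 2*R) ∪ Finset.Icc (j' - 2*R) (j' + 2*R) := by
        intro k hk
        rcases (Finset.mem_filter.mp hk).2 with h | h
        · rcases abs_le.mp h with ⟨h1, h2⟩
          exact Finset.mem_union_left _ (Finset.mem_Icc.mpr ⟨by linarith, by linarith⟩)
        · rcases abs_le.mp h with ⟨h1, h2⟩
          exact Finset.mem_union_right _ (Finset.mem_Icc.mpr ⟨by linarith, by linarith⟩)
      have hcard : ((Lset ia ib n).filter
          (fun k => |j - k| ≤ 2*R ∨ |j' - k| ≤ 2*R)).card ≤ 2*K := by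
        refine le_trans (Finset.card_le_card hsub) (le_trans (Finset.card_union_le _ _) ?_)
        rw [Int.card_Icc, Int.card_Icc, hKdef]
        omega
      exact mul_le_mul_of_nonneg_right (by exact_mod_cast hcard) hB80
    have hT : ∀ j : ℤ, ∑ j' ∈ Jset ia ib n, ∑ k ∈ Lset ia ib n, ‖G k j j'‖ ≤ C1 := by
      intro j
      have hfil : ∑ j' ∈ (Jset ia ib n).filter (fun j' => |j' - j| ≤ 2*R),
            ∑ k ∈ Lset ia ib n, ‖G k j j'‖
          = ∑ j' ∈ Jset ia ib n, ∑ k ∈ Lset ia ib n, ‖G k j j'‖ := by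
        refine Finset.sum_filter_of_ne fun j' _ hne => ?_
        by_contra hp
        push_neg at hp
        refine hne (Finset.sum_eq_zero fun k _ => ?_)
        rw [hGyz k j j' hp, norm_zero]
      rw [← hfil]
      refine le_trans (Finset.sum_le_card_nsmul _ _ ((2*K : ℕ) * B8)
        (fun j' _ => hV j j')) ?_
      rw [nsmul_eq_mul]
      have hsub : (Jset ia ib n).filter (fun j' => |j' - j| ≤ 2*R)
          ⊆ Finset.Icc (j - 2*R) (j + 2*R) := by
        intro j' hj'
        rcases abs_le.mp (Finset.mem_filter.mp hj').2 with ⟨h1, h2⟩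
        exact Finset.mem_Icc.mpr ⟨by linarith, by linarith⟩
      have hcard : ((Jset ia ib n).filter (fun j' => |j' - j| ≤ 2*R)).card ≤ K := by
        refine le_trans (Finset.card_le_card hsub) ?_
        rw [Int.card_Icc, hKdef]
        omega
      rw [hC1def]
      exact mul_le_mul_of_nonneg_right (by exact_mod_cast hcard)
        (by positivity)
    have hS : ‖∑ k ∈ Lset ia ib n, ∑ j ∈ Jset ia ib n, ∑ j' ∈ Jset ia ib n,
          (Fx k * (Fy j * Fz j' - Fz j' * Fy j) - (Fy j * Fz j' - Fz j' * Fy j) * Fx k)‖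
        ≤ (Ncard ia ib n : ℝ) * C1 := by
      have h1 : ‖∑ k ∈ Lset ia ib n, ∑ j ∈ Jset ia ib n, ∑ j' ∈ Jset ia ib n,
            (Fx k * (Fy j * Fz j' - Fz j' * Fy j) - (Fy j * Fz j' - Fz j' * Fy j) * Fx k)‖
          ≤ ∑ k ∈ Lset ia ib n, ∑ j ∈ Jset ia ib n, ∑ j' ∈ Jset ia ib n, ‖G k j j'‖ := by
        refine (norm_sum_le _ _).trans (Finset.sum_le_sum fun k _ => ?_)
        refine (norm_sum_le _ _).trans (Finset.sum_le_sum fun j _ => ?_)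
        exact norm_sum_le _ _
      refine h1.trans ?_
      rw [Finset.sum_comm]
      calc ∑ j ∈ Jset ia ib n, ∑ k ∈ Lset ia ib n, ∑ j' ∈ Jset ia ib n, ‖G k j j'‖
          = ∑ j ∈ Jset ia ib n, ∑ j' ∈ Jset ia ib n, ∑ k ∈ Lset ia ib n, ‖G k j j'‖ := by
            refine Finset.sum_congr rfl fun j _ => Finset.sum_comm
        _ ≤ ∑ _j ∈ Jset ia ib n, C1 := Finset.sum_le_sum fun j _ => hT j
        _ = ((Jset ia ib n).card : ℝ) * C1 := by
            rw [Finset.sum_const, nsmul_eq_mul]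
        _ ≤ (Ncard ia ib n : ℝ) * C1 := by
            refine mul_le_mul_of_nonneg_right ?_ hC10
            exact_mod_cast Jset_card_le ia ib n
      -- end
    calc s⁻¹ * s⁻¹ * s⁻¹ * ‖∑ k ∈ Lset ia ib n, ∑ j ∈ Jset ia ib n, ∑ j' ∈ Jset ia ib n,
          (Fx k * (Fy j * Fz j' - Fz j' * Fy j) - (Fy j * Fz j' - Fz j' * Fy j) * Fx k)‖
        ≤ s⁻¹ * s⁻¹ * s⁻¹ * ((Ncard ia ib n : ℝ) * C1) := by
          refine mul_le_mul_of_nonneg_left hS (by positivity)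
      _ = C1 / s := by
          rw [← hss]; field_simp
  -- limit
  have hib : Monotone ib := monotone_nat_of_le_succ (fun n => (hImono n).2)
  have hia : Antitone ia := antitone_nat_of_succ_le (fun n => (hImono n).1)
  have hNtend : Tendsto (fun n => Ncard ia ib n) atTop atTop := by
    rw [tendsto_atTop_atTop]
    intro b
    obtain ⟨n1, h1a, h1b⟩ := hIunion (-(b:ℤ))
    obtain ⟨n2, h2a, h2b⟩ := hIunion (b:ℤ)
    refine ⟨max n1 n2, fun n hn => ?_⟩
    have e1 : ia n ≤ -(b:ℤ) := le_trans (hia (le_trans (le_max_left n1 n2) hn)) h1a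
    have e2 : (b:ℤ) ≤ ib n := le_trans h2b (hib (le_trans (le_max_right n1 n2) hn))
    have : Ncard ia ib n = (ib n + 1 - ia n).toNat := by rw [Ncard, Int.card_Icc]
    omega
  have hsq : Tendsto (fun n => Real.sqrt (Ncard ia ib n)) atTop atTop :=
    sqrt_tendsto_atTop'.comp (tendsto_natCast_atTop_atTop.comp hNtend)
  have hlim : Tendsto (fun n => C1 / Real.sqrt (Ncard ia ib n)) atTop (𝓝 0) :=
    Tendsto.div_atTop tendsto_const_nhds hsq
  refine squeeze_zero' (Eventually.of_forall fun n => norm_nonneg _) ?_ hlim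
  filter_upwards [hNtend.eventually_ge_atTop 3] with n hn
  exact key n hn
end

section
/- For every x ∈ M₀ₛₐ there exists N such that for all n ≥ N the elements F_{J^{(n)}_1}(x), …, F_{J^{(n)}_{m_n}}(x) pairwise commute and χ(e^{i·s^J_n(x)}) = (χ(e^{i·√(p_n/|I_n|)·F_{J^{(n)}_1}(x)}))^{m_n}. -/
open Filter Topology

open scoped ComplexOrder

/-- The local fluctuation `F_S(x)` over an arbitrary finite set `S ⊆ ℤ`. -/
noncomputable def Ffin {A : Type*} [NormedRing A] [StarRing A] [NormedAlgebra ℂ A]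
    [StarModule ℂ A] (γ : ℤ → A ≃⋆ₐ[ℂ] A) (χ : A →ₗ[ℂ] ℂ) (S : Finset ℤ)
    (x : A) : A :=
  (Real.sqrt S.card : ℂ)⁻¹ • ∑ j ∈ S, (γ j x - χ x • 1)

section Helpers

variable {A : Type*} [NormedRing A] [StarRing A] [CStarRing A] [NormedAlgebra ℂ A]
    [CompleteSpace A] [StarModule ℂ A]

lemma helper_sqrt_factor (a : A) (ha : IsSelfAdjoint a) (hs : spectrum ℝ a ⊆ Set.Ici 0) :
    ∃ b : A, a = star b * b := by
  letI : CStarAlgebra A := ⟨⟩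
  refine ⟨cfc Real.sqrt a, ?_⟩
  have hb : IsSelfAdjoint (cfc Real.sqrt a) := cfc_predicate _ a
  have h1 : cfc (fun t => Real.sqrt t * Real.sqrt t) a = cfc Real.sqrt a * cfc Real.sqrt a :=
    cfc_mul (R := ℝ) Real.sqrt Real.sqrt a
  have h2 : cfc (fun t => Real.sqrt t * Real.sqrt t) a = cfc (id : ℝ → ℝ) a :=
    cfc_congr fun t ht => by simpa using Real.mul_self_sqrt (hs ht)
  rw [hb.star_eq, ← h1, h2, cfc_id (R := ℝ) a ha]

lemma helper_spec_nonneg [Nontrivial A] (x : A) :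
    spectrum ℝ ((‖x‖ : ℝ) • (1 : A) - x) ⊆ Set.Ici 0 := by
  have h1 : (‖x‖ : ℝ) • (1 : A) = algebraMap ℝ A ‖x‖ := (Algebra.algebraMap_eq_smul_one _).symm
  rw [h1]
  intro r hr
  rw [← spectrum.singleton_sub_eq] at hr
  obtain ⟨s, hs, t, ht, rfl⟩ := Set.mem_sub.mp hr
  rw [Set.mem_singleton_iff] at hs
  subst hs
  have hb := spectrum.norm_le_norm_of_mem (𝕜 := ℝ) ht
  simp only [Real.norm_eq_abs] at hb
  have hb2 := abs_le.mp hb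
  simp only [Set.mem_Ici, sub_nonneg]
  exact hb2.2

lemma helper_chi_sa_bound (χ : A →ₗ[ℂ] ℂ) (hχ1 : χ 1 = 1)
    (hχpos : ∀ x : A, 0 ≤ χ (star x * x)) (z : A) (hz : IsSelfAdjoint z) :
    ‖χ z‖ ≤ ‖z‖ := by
  have hnt : Nontrivial A := by
    refine ⟨1, 0, fun h => ?_⟩
    rw [h, map_zero] at hχ1
    exact one_ne_zero hχ1.symm
  have hpos : ∀ w : A, IsSelfAdjoint w → spectrum ℝ w ⊆ Set.Ici 0 → 0 ≤ χ w := by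
    intro w hw hs
    obtain ⟨c, rfl⟩ := helper_sqrt_factor w hw hs
    exact hχpos c
  have hreal : ∀ r : ℝ, χ (r • (1 : A)) = (r : ℂ) := by
    intro r
    rw [← Complex.coe_smul, map_smul, hχ1, smul_eq_mul, mul_one]
  have hsmul_sa : ∀ r : ℝ, IsSelfAdjoint (r • (1 : A)) := by
    intro r
    rw [← Complex.coe_smul]
    exact IsSelfAdjoint.smul (Complex.conj_ofReal r) (IsSelfAdjoint.one A)
  have h1 : 0 ≤ χ ((‖z‖ : ℝ) • (1 : A) - z) :=
    hpos _ ((hsmul_sa _).sub hz) (helper_spec_nonneg z)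
  have h2 : 0 ≤ χ ((‖z‖ : ℝ) • (1 : A) - (-z)) := by
    have := hpos _ ((hsmul_sa _).sub hz.neg) (helper_spec_nonneg (-z))
    rwa [norm_neg] at this
  rw [map_sub, hreal] at h1 h2
  rw [map_neg, sub_neg_eq_add] at h2
  rw [Complex.le_def] at h1 h2
  simp only [Complex.zero_re, Complex.zero_im, Complex.sub_re, Complex.sub_im, Complex.add_re,
    Complex.add_im, Complex.ofReal_re, Complex.ofReal_im] at h1 h2
  have him : (χ z).im = 0 := by linarith [h1.2, h2.2]
  have hre1 : (χ z).re ≤ ‖z‖ := by linarith [h1.1]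
  have hre2 : -‖z‖ ≤ (χ z).re := by linarith [h2.1]
  have : χ z = ((χ z).re : ℂ) := Complex.ext (by simp) (by simp [him])
  rw [this, Complex.norm_real, Real.norm_eq_abs]
  exact abs_le.mpr ⟨hre2, hre1⟩

lemma helper_chi_cont (χ : A →ₗ[ℂ] ℂ) (hχ1 : χ 1 = 1)
    (hχpos : ∀ x : A, 0 ≤ χ (star x * x)) : Continuous χ := by
  refine AddMonoidHomClass.continuous_of_bound χ 2 fun y => ?_
  obtain ⟨h, hh⟩ : ∃ h' : A, h' = (2 : ℂ)⁻¹ • (y + star y) := ⟨_, rfl⟩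
  obtain ⟨k, hk⟩ : ∃ k' : A, k' = (2 * Complex.I)⁻¹ • (y - star y) := ⟨_, rfl⟩
  have hsa_h : IsSelfAdjoint h := by
    rw [hh]
    unfold IsSelfAdjoint
    rw [star_smul, star_add, star_star]
    congr 1
    · simp
    · exact add_comm _ _
  have hsa_k : IsSelfAdjoint k := by
    rw [hk]
    unfold IsSelfAdjoint
    rw [star_smul, star_sub, star_star]
    have h1 : star ((2 * Complex.I)⁻¹) = -((2 * Complex.I)⁻¹) := by
      simp only [star_inv₀, star_mul', Complex.star_def, Complex.conj_I, map_ofNat]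
      rw [show (2 : ℂ) * -Complex.I = -(2 * Complex.I) by ring, inv_neg]
    rw [h1, neg_smul, ← smul_neg, neg_sub]
  have hdecomp : y = h + Complex.I • k := by
    rw [hh, hk, smul_smul]
    have hc : Complex.I * (2 * Complex.I)⁻¹ = (2 : ℂ)⁻¹ := by
      rw [mul_inv, mul_comm ((2 : ℂ))⁻¹, ← mul_assoc,
        mul_inv_cancel₀ Complex.I_ne_zero, one_mul]
    rw [hc, ← smul_add]
    have h2 : y + star y + (y - star y) = (2 : ℂ) • y := by
      rw [two_smul]; abel
    rw [h2, smul_smul]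
    norm_num
  have hnorm_h : ‖h‖ ≤ ‖y‖ := by
    rw [hh]
    calc ‖(2 : ℂ)⁻¹ • (y + star y)‖ = ‖(2 : ℂ)⁻¹‖ * ‖y + star y‖ := norm_smul _ _
    _ ≤ (2 : ℝ)⁻¹ * (‖y‖ + ‖star y‖) := by
        gcongr
        · simp
        · exact norm_add_le _ _
    _ = ‖y‖ := by rw [norm_star]; ring
  have hnorm_k : ‖k‖ ≤ ‖y‖ := by
    rw [hk]
    calc ‖(2 * Complex.I)⁻¹ • (y - star y)‖ = ‖(2 * Complex.I)⁻¹‖ * ‖y - star y‖ := norm_smul _ _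
    _ ≤ (2 : ℝ)⁻¹ * (‖y‖ + ‖star y‖) := by
        gcongr
        · rw [norm_inv, norm_mul, Complex.norm_I]
          norm_num
        · exact norm_sub_le _ _
    _ = ‖y‖ := by rw [norm_star]; ring
  have hχy : χ y = χ h + Complex.I * χ k := by
    rw [hdecomp, map_add, map_smul, smul_eq_mul]
  calc ‖χ y‖ = ‖χ h + Complex.I * χ k‖ := by rw [hχy]
  _ ≤ ‖χ h‖ + ‖Complex.I * χ k‖ := norm_add_le _ _
  _ = ‖χ h‖ + ‖χ k‖ := by rw [norm_mul, Complex.norm_I, one_mul]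
  _ ≤ ‖h‖ + ‖k‖ := by
      gcongr
      · exact helper_chi_sa_bound χ hχ1 hχpos h hsa_h
      · exact helper_chi_sa_bound χ hχ1 hχpos k hsa_k
  _ ≤ 2 * ‖y‖ := by linarith

lemma helper_exp_mem_closure (S : Subalgebra ℂ A) {y : A} (hy : y ∈ S) :
    NormedSpace.exp y ∈ closure (S : Set A) := by
  have h := NormedSpace.exp_series_hasSum_exp' (𝕂 := ℂ) y
  refine mem_closure_of_tendsto h.tendsto_sum_nat (Filter.Eventually.of_forall fun n => ?_)
  exact S.sum_mem fun j _ => S.smul_mem (S.pow_mem hy j) _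

lemma helper_closure_chi (χ : A →ₗ[ℂ] ℂ) (hcont : Continuous χ) {s t : Set A}
    (h : ∀ u ∈ s, ∀ v ∈ t, χ (u * v) = χ u * χ v)
    {u v : A} (hu : u ∈ closure s) (hv : v ∈ closure t) : χ (u * v) = χ u * χ v := by
  have hmem : (u, v) ∈ closure (s ×ˢ t) := by
    rw [closure_prod_eq]
    exact ⟨hu, hv⟩
  have hc : IsClosed {p : A × A | χ (p.1 * p.2) = χ p.1 * χ p.2} :=
    isClosed_eq (hcont.comp (continuous_fst.mul continuous_snd))
      ((hcont.comp continuous_fst).mul (hcont.comp continuous_snd))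
  have hsub : s ×ˢ t ⊆ {p : A × A | χ (p.1 * p.2) = χ p.1 * χ p.2} :=
    fun p hp => h p.1 hp.1 p.2 hp.2
  exact hc.closure_subset_iff.mpr hsub hmem

end Helpers

theorem exp_sJ_factorization
    {A : Type*} [NormedRing A] [StarRing A] [CStarRing A] [NormedAlgebra ℂ A]
    [CompleteSpace A] [StarModule ℂ A]
    (M : ℤ → ℤ → Subalgebra ℂ A)
    (hmono : ∀ a b c d : ℤ, a ≤ b → c ≤ a → b ≤ d → M a b ≤ M c d)
    (hdense : Dense {x : A | ∃ a b : ℤ, a ≤ b ∧ x ∈ M a b})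
    (hcomm : ∀ a b c d : ℤ, a ≤ b → c ≤ d → (b < c ∨ d < a) →
      ∀ x ∈ M a b, ∀ y ∈ M c d, x * y = y * x)
    (γ : ℤ → A ≃⋆ₐ[ℂ] A)
    (hγ0 : ∀ x : A, γ 0 x = x)
    (hγadd : ∀ j k : ℤ, ∀ x : A, γ (j + k) x = γ j (γ k x))
    (hγM : ∀ j a b : ℤ, a ≤ b → ⇑(γ j) '' (M a b : Set A) = (M (a + j) (b + j) : Set A))
    (χ : A →ₗ[ℂ] ℂ)
    (hχ1 : χ 1 = 1)
    (hχpos : ∀ x : A, 0 ≤ χ (star x * x))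
    (hχinv : ∀ j : ℤ, ∀ x : A, χ (γ j x) = χ x)
    (hχmult : ∀ a b c d : ℤ, a ≤ b → c ≤ d → (b < c ∨ d < a) →
      ∀ x ∈ M a b, ∀ y ∈ M c d, χ (x * y) = χ x * χ y)
    (ia ib : ℕ → ℤ)
    (hI : ∀ n : ℕ, ia n ≤ ib n)
    (hImono : ∀ n : ℕ, ia (n + 1) ≤ ia n ∧ ib n ≤ ib (n + 1))
    (hIunion : ∀ k : ℤ, ∃ n : ℕ, ia n ≤ k ∧ k ≤ ib n)
    (x : A)
    (hx : (∃ a b : ℤ, a ≤ b ∧ x ∈ M a b) ∧ IsSelfAdjoint x) :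
    ∃ N : ℕ, ∀ n : ℕ, N ≤ n →
      (∀ l ∈ Finset.Icc 1 (mn ia ib n), ∀ l' ∈ Finset.Icc 1 (mn ia ib n),
        Commute (Ffin γ χ (Jblock ia ib n l) x) (Ffin γ χ (Jblock ia ib n l') x)) ∧
      χ (NormedSpace.exp (Complex.I • sJ γ χ ia ib n x)) =
        (χ (NormedSpace.exp
          ((Complex.I * (Real.sqrt ((pn ia ib n : ℝ) / (Ncard ia ib n : ℝ)) : ℂ)) •
            Ffin γ χ (Jblock ia ib n 1) x))) ^ (mn ia ib n) := by
  classical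
  obtain ⟨⟨a, b, hab, hxM⟩, hsa⟩ := hx
  have hχcont : Continuous χ := helper_chi_cont χ hχ1 hχpos
  letI : CStarAlgebra A := ⟨⟩
  let +nondep : NormedAlgebra ℚ A := NormedAlgebra.restrictScalars ℚ ℂ A
  have hγcont : ∀ j : ℤ, Continuous (γ j) := fun j =>
    (NonUnitalStarAlgHom.isometry (γ j) (γ j).injective).continuous
  have hγmem : ∀ j : ℤ, γ j x ∈ M (a + j) (b + j) := by
    intro j
    have h2 : γ j x ∈ ⇑(γ j) '' (M a b : Set A) := Set.mem_image_of_mem _ hxM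
    rwa [hγM j a b hab] at h2
  set D : ℕ := (b - a).toNat with hD
  -- functions of the cardinality
  set pf : ℕ → ℕ := fun c => ⌊(c : ℝ) ^ ((1 : ℝ) / 4) * Real.log c⌋₊ with hpf
  set qf : ℕ → ℕ := fun c => ⌊(c : ℝ) ^ ((1 : ℝ) / 2) / (pf c : ℝ)⌋₊ with hqf
  -- log is eventually below the fourth root
  have hlog : ∀ᶠ r : ℝ in atTop, Real.log r ≤ r ^ ((1 : ℝ) / 4) := by
    have h := (isLittleO_log_rpow_atTop (by norm_num : (0 : ℝ) < 1 / 4)).def one_pos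
    filter_upwards [h, eventually_ge_atTop (0 : ℝ)] with r hr hr0
    calc Real.log r ≤ ‖Real.log r‖ := le_abs_self _
    _ ≤ 1 * ‖r ^ ((1 : ℝ) / 4)‖ := hr
    _ = |r ^ ((1 : ℝ) / 4)| := by rw [one_mul]; rfl
    _ = r ^ ((1 : ℝ) / 4) := abs_of_nonneg (Real.rpow_nonneg hr0 _)
  -- the ratio r^{1/4} / log r tends to infinity
  have h4 : Tendsto (fun r : ℝ => r ^ ((1 : ℝ) / 4) / Real.log r) atTop atTop := by
    have h0 : Tendsto (fun r : ℝ => Real.log r / r ^ ((1 : ℝ) / 4)) atTop (𝓝 0) :=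
      (isLittleO_log_rpow_atTop (by norm_num : (0 : ℝ) < 1 / 4)).tendsto_div_nhds_zero
    have hpos : ∀ᶠ r : ℝ in atTop, Real.log r / r ^ ((1 : ℝ) / 4) ∈ Set.Ioi (0 : ℝ) := by
      filter_upwards [eventually_gt_atTop (1 : ℝ)] with r hr
      exact div_pos (Real.log_pos hr) (Real.rpow_pos_of_pos (by linarith) _)
    have h1 := (tendsto_nhdsWithin_of_tendsto_nhds_of_eventually_within _ h0 hpos).inv_tendsto_nhdsGT_zero
    refine h1.congr fun r => ?_
    simp [inv_div]
  -- eventual lower bound on pf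
  have E2 : ∀ᶠ c : ℕ in atTop, 1 ≤ pf c := by
    have hr : ∀ᶠ r : ℝ in atTop, 1 ≤ r ^ ((1 : ℝ) / 4) * Real.log r := by
      filter_upwards [eventually_ge_atTop (3 : ℝ)] with r hr
      have h1 : (1 : ℝ) ≤ r ^ ((1 : ℝ) / 4) :=
        Real.one_le_rpow (by linarith) (by norm_num)
      have h2 : (1 : ℝ) ≤ Real.log r := by
        rw [Real.le_log_iff_exp_le (by linarith)]
        calc Real.exp 1 ≤ 2.7182818286 := Real.exp_one_lt_d9.le
        _ ≤ r := by linarith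
      calc (1 : ℝ) = 1 * 1 := (one_mul 1).symm
      _ ≤ r ^ ((1 : ℝ) / 4) * Real.log r := by
            apply mul_le_mul h1 h2 zero_le_one (by linarith)
    filter_upwards [tendsto_natCast_atTop_atTop.eventually hr] with c hc
    rw [hpf]
    exact Nat.le_floor (by exact_mod_cast hc)
  -- eventual lower bound on qf
  have E3 : ∀ᶠ c : ℕ in atTop, D + 1 ≤ qf c := by
    have hr := h4.eventually_ge_atTop ((D : ℝ) + 1)
    filter_upwards [E2, tendsto_natCast_atTop_atTop.eventually hr,
      tendsto_natCast_atTop_atTop.eventually (eventually_gt_atTop (1 : ℝ)),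
      tendsto_natCast_atTop_atTop.eventually hlog] with c hpc h4c h1c hlogc
    have hc0 : (0 : ℝ) < (c : ℝ) := by linarith
    have hlogpos : 0 < Real.log (c : ℝ) := Real.log_pos h1c
    have hpfpos : (0 : ℝ) < (pf c : ℝ) := by exact_mod_cast hpc
    have hple : (pf c : ℝ) ≤ (c : ℝ) ^ ((1 : ℝ) / 4) * Real.log (c : ℝ) := by
      rw [hpf]
      exact Nat.floor_le (by positivity)
    have h12 : (c : ℝ) ^ ((1 : ℝ) / 2) = (c : ℝ) ^ ((1 : ℝ) / 4) * (c : ℝ) ^ ((1 : ℝ) / 4) := by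
      rw [← Real.rpow_add hc0]; norm_num
    have hkey : ((D : ℝ) + 1) ≤ (c : ℝ) ^ ((1 : ℝ) / 2) / (pf c : ℝ) := by
      have hstep : (c : ℝ) ^ ((1 : ℝ) / 2) / ((c : ℝ) ^ ((1 : ℝ) / 4) * Real.log (c : ℝ)) ≤
          (c : ℝ) ^ ((1 : ℝ) / 2) / (pf c : ℝ) :=
        div_le_div_of_nonneg_left (by positivity) hpfpos hple
      have heq : (c : ℝ) ^ ((1 : ℝ) / 2) / ((c : ℝ) ^ ((1 : ℝ) / 4) * Real.log (c : ℝ)) =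
          (c : ℝ) ^ ((1 : ℝ) / 4) / Real.log (c : ℝ) := by
        rw [h12, mul_div_mul_left _ _ (ne_of_gt (Real.rpow_pos_of_pos hc0 _))]
      linarith [heq ▸ hstep]
    rw [hqf]
    refine Nat.le_floor ?_
    push_cast
    exact hkey
  -- the cardinalities tend to infinity
  have hIa : Antitone ia := antitone_nat_of_succ_le fun n => (hImono n).1
  have hIb : Monotone ib := monotone_nat_of_le_succ fun n => (hImono n).2
  have hNmono : Monotone (fun n => Ncard ia ib n) := fun n m hnm =>
    Finset.card_le_card (Finset.Icc_subset_Icc (hIa hnm) (hIb hnm))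
  have hNT : Tendsto (fun n => Ncard ia ib n) atTop atTop := by
    refine tendsto_atTop_atTop_of_monotone hNmono ?_
    intro K
    obtain ⟨n₁, hn₁⟩ := hIunion 0
    obtain ⟨n₂, hn₂⟩ := hIunion (K : ℤ)
    refine ⟨max n₁ n₂, ?_⟩
    have hsub : Finset.Icc (0 : ℤ) (K : ℤ) ⊆ Finset.Icc (ia (max n₁ n₂)) (ib (max n₁ n₂)) :=
      Finset.Icc_subset_Icc ((hIa (le_max_left _ _)).trans hn₁.1)
        (hn₂.2.trans (hIb (le_max_right _ _)))
    have hcard := Finset.card_le_card hsub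
    rw [Int.card_Icc] at hcard
    have : Ncard ia ib (max n₁ n₂) = (Finset.Icc (ia (max n₁ n₂)) (ib (max n₁ n₂))).card := rfl
    omega
  have hEv : ∀ᶠ c : ℕ in atTop, 3 ≤ c ∧ 1 ≤ pf c ∧ D + 1 ≤ qf c := by
    filter_upwards [eventually_ge_atTop 3, E2, E3] with c h1 h2 h3
    exact ⟨h1, h2, h3⟩
  have hGood := hNT.eventually hEv
  obtain ⟨N, hN⟩ := eventually_atTop.mp hGood
  refine ⟨N, fun n hn => ?_⟩
  obtain ⟨h3c, hp1, hq1⟩ := hN n hn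
  set Nc := Ncard ia ib n with hNc
  set p := pn ia ib n with hp
  set q := qn ia ib n with hq
  set m := mn ia ib n with hm
  have hp1' : 1 ≤ p := hp1
  have hq1' : D + 1 ≤ q := hq1
  -- block start points
  set sig : ℕ → ℤ := fun l => ia n + (((l - 1) * (p + q) : ℕ) : ℤ) with hsig
  have hJb : ∀ l : ℕ, Jblock ia ib n l = Finset.Icc (sig l) (sig l + (p : ℤ) - 1) :=
    fun l => rfl
  have hcard : ∀ l : ℕ, (Jblock ia ib n l).card = p := by
    intro l
    rw [hJb, Int.card_Icc]
    omega
  have hsig_mono : ∀ l l' : ℕ, l ≤ l' → sig l ≤ sig l' := by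
    intro l l' h
    simp only [hsig]
    have : (l - 1) * (p + q) ≤ (l' - 1) * (p + q) :=
      Nat.mul_le_mul_right _ (by omega)
    omega
  have hsig_gap : ∀ l l' : ℕ, 1 ≤ l → l < l' → sig l + (p : ℤ) + (q : ℤ) ≤ sig l' := by
    intro l l' h1 h2
    have hmul : (l - 1) * (p + q) + (p + q) ≤ (l' - 1) * (p + q) := by
      calc (l - 1) * (p + q) + (p + q) = ((l - 1) + 1) * (p + q) := by ring
      _ ≤ (l' - 1) * (p + q) := Nat.mul_le_mul_right _ (by omega)
    have hmul' : (((l - 1) * (p + q) : ℕ) : ℤ) + ((p : ℤ) + (q : ℤ)) ≤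
        (((l' - 1) * (p + q) : ℕ) : ℤ) := by exact_mod_cast hmul
    simp only [hsig]
    omega
  have hba : b - a ≤ (D : ℤ) := by rw [hD]; omega
  have hqD : (D : ℤ) + 1 ≤ (q : ℤ) := by exact_mod_cast hq1'
  have hsep : ∀ l l' : ℕ, 1 ≤ l → l < l' → b + sig l + (p : ℤ) - 1 < a + sig l' := by
    intro l l' h1 h2
    have := hsig_gap l l' h1 h2
    omega
  -- membership of the block fluctuations
  have hFmem : ∀ l : ℕ, Ffin γ χ (Jblock ia ib n l) x ∈ M (a + sig l) (b + sig l + (p : ℤ) - 1) := by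
    intro l
    rw [Ffin]
    refine Subalgebra.smul_mem _ (Subalgebra.sum_mem _ fun j hj => ?_) _
    rw [hJb, Finset.mem_Icc] at hj
    refine Subalgebra.sub_mem _ ?_ (Subalgebra.smul_mem _ (Subalgebra.one_mem _) _)
    exact hmono (a + j) (b + j) (a + sig l) (b + sig l + (p : ℤ) - 1)
      (by omega) (by omega) (by omega) (hγmem j)
  have hvalid : ∀ l : ℕ, a + sig l ≤ b + sig l + (p : ℤ) - 1 := by
    intro l
    have : (1 : ℤ) ≤ (p : ℤ) := by exact_mod_cast hp1'
    omega
  -- commutation of block fluctuations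
  have hcommF : ∀ l l' : ℕ, 1 ≤ l → 1 ≤ l' →
      Commute (Ffin γ χ (Jblock ia ib n l) x) (Ffin γ χ (Jblock ia ib n l') x) := by
    intro l l' hl hl'
    rcases lt_trichotomy l l' with h | h | h
    · exact hcomm _ _ _ _ (hvalid l) (hvalid l') (Or.inl (hsep l l' hl h))
        _ (hFmem l) _ (hFmem l')
    · rw [h]
    · exact hcomm _ _ _ _ (hvalid l) (hvalid l') (Or.inr (hsep l' l hl' h))
        _ (hFmem l) _ (hFmem l')
  have hgoal1 : ∀ l ∈ Finset.Icc 1 m, ∀ l' ∈ Finset.Icc 1 m,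
      Commute (Ffin γ χ (Jblock ia ib n l) x) (Ffin γ χ (Jblock ia ib n l') x) := by
    intro l hl l' hl'
    rw [Finset.mem_Icc] at hl hl'
    exact hcommF l l' hl.1 hl'.1
  refine ⟨hgoal1, ?_⟩
  -- part 2
  set cc : ℂ := Complex.I * (Real.sqrt ((p : ℝ) / (Nc : ℝ)) : ℂ) with hcc
  have hsig1' : sig 1 = ia n := by simp [hsig]
  have hsig1 : ∀ l : ℕ, sig 1 ≤ sig l := by
    intro l
    simp only [hsig]
    have : (1 - 1) * (p + q) ≤ (l - 1) * (p + q) := Nat.mul_le_mul_right _ (by omega)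
    omega
  have hp1z : (1 : ℤ) ≤ (p : ℤ) := by exact_mod_cast hp1'
  have hvalid2 : ∀ k : ℕ, a + sig 1 ≤ b + sig k + (p : ℤ) - 1 := by
    intro k
    have := hsig1 k
    omega
  have hdisj2 : ∀ l l' : ℕ, 1 ≤ l → l < l' →
      Disjoint (Jblock ia ib n l) (Jblock ia ib n l') := by
    intro l l' h1 h2
    refine Finset.disjoint_left.mpr fun k hk hk' => ?_
    rw [hJb, Finset.mem_Icc] at hk hk'
    have hgap := hsig_gap l l' h1 h2
    have hq0 : (0 : ℤ) ≤ (q : ℤ) := by positivity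
    omega
  have hdisj : Set.PairwiseDisjoint (↑(Finset.Icc 1 m) : Set ℕ)
      (fun l => Jblock ia ib n l) := by
    intro l hl l' hl' hne
    simp only [Finset.coe_Icc, Set.mem_Icc] at hl hl'
    rcases hne.lt_or_gt with h | h
    · exact hdisj2 l l' hl.1 h
    · exact (hdisj2 l' l hl'.1 h).symm
  have hNpos : (0 : ℝ) < (Nc : ℝ) := by
    have : 0 < Nc := by omega
    exact_mod_cast this
  have hppos : (0 : ℝ) < (p : ℝ) := by exact_mod_cast hp1'
  have hsqrtp : Real.sqrt (p : ℝ) ≠ 0 := ne_of_gt (Real.sqrt_pos.mpr hppos)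
  have hsqrtN : Real.sqrt (Nc : ℝ) ≠ 0 := ne_of_gt (Real.sqrt_pos.mpr hNpos)
  have hsp : ((Real.sqrt (p : ℝ) : ℝ) : ℂ) ≠ 0 := Complex.ofReal_ne_zero.mpr hsqrtp
  have hsN : ((Real.sqrt (Nc : ℝ) : ℝ) : ℂ) ≠ 0 := Complex.ofReal_ne_zero.mpr hsqrtN
  have hscal : cc * ((Real.sqrt (p : ℝ) : ℝ) : ℂ)⁻¹
      = Complex.I * ((Real.sqrt (Nc : ℝ) : ℝ) : ℂ)⁻¹ := by
    rw [hcc, Real.sqrt_div hppos.le]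
    push_cast
    field_simp
  -- expansion of sJ
  have hsJ : Complex.I • sJ γ χ ia ib n x
      = ∑ l ∈ Finset.Icc 1 m, cc • Ffin γ χ (Jblock ia ib n l) x := by
    simp only [sJ]
    rw [if_pos h3c]
    rw [show Jset ia ib n = (Finset.Icc 1 m).biUnion (fun l => Jblock ia ib n l) from rfl]
    rw [Finset.sum_biUnion hdisj, smul_smul, Finset.smul_sum]
    refine Finset.sum_congr rfl fun l hl => ?_
    simp only [Ffin, hcard l]
    rw [smul_smul]
    congr 1
    exact hscal.symm
  have hpair : (↑(Finset.Icc 1 m) : Set ℕ).Pairwise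
      (Function.onFun Commute fun l => cc • Ffin γ χ (Jblock ia ib n l) x) := by
    intro l hl l' hl' hne
    simp only [Finset.coe_Icc, Set.mem_Icc] at hl hl'
    simp only [Function.onFun]
    exact ((hcommF l l' hl.1 hl'.1).smul_left cc).smul_right cc
  have hexp := NormedSpace.exp_sum_of_commute (Finset.Icc 1 m)
    (fun l => cc • Ffin γ χ (Jblock ia ib n l) x) hpair
  -- memberships
  have hgmem : ∀ l : ℕ, NormedSpace.exp (cc • Ffin γ χ (Jblock ia ib n l) x) ∈
      closure ((M (a + sig l) (b + sig l + (p : ℤ) - 1) : Subalgebra ℂ A) : Set A) :=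
    fun l => helper_exp_mem_closure _ (Subalgebra.smul_mem _ (hFmem l) cc)
  have hclosχ : ∀ (a' b' c' d' : ℤ), a' ≤ b' → c' ≤ d' → (b' < c' ∨ d' < a') →
      ∀ u ∈ closure ((M a' b' : Subalgebra ℂ A) : Set A),
      ∀ v ∈ closure ((M c' d' : Subalgebra ℂ A) : Set A), χ (u * v) = χ u * χ v :=
    fun a' b' c' d' h1 h2 h3 u hu v hv =>
      helper_closure_chi χ hχcont (fun s hs t ht => hχmult a' b' c' d' h1 h2 h3 s hs t ht) hu hv
  have hmemTC : ∀ (S : Subalgebra ℂ A) (z : A),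
      z ∈ closure (S : Set A) ↔ z ∈ S.topologicalClosure := by
    intro S z
    rw [← SetLike.mem_coe, Subalgebra.topologicalClosure_coe]
  have hsubT : ∀ l k : ℕ, l ≤ k →
      M (a + sig l) (b + sig l + (p : ℤ) - 1) ≤ M (a + sig 1) (b + sig k + (p : ℤ) - 1) := by
    intro l k hlk
    refine hmono _ _ _ _ (hvalid l) ?_ ?_
    · have := hsig1 l
      omega
    · have := hsig_mono l k hlk
      omega
  have hTmono : ∀ k : ℕ, M (a + sig 1) (b + sig k + (p : ℤ) - 1) ≤
      M (a + sig 1) (b + sig (k + 1) + (p : ℤ) - 1) := by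
    intro k
    refine hmono _ _ _ _ (hvalid2 k) le_rfl ?_
    have := hsig_mono k (k + 1) (Nat.le_succ k)
    omega
  have hPgen : ∀ k' : ℕ, (↑(Finset.Icc 1 k') : Set ℕ).Pairwise
      (Function.onFun Commute fun l => NormedSpace.exp (cc • Ffin γ χ (Jblock ia ib n l) x)) := by
    intro k' l hl l' hl' hne
    simp only [Finset.coe_Icc, Set.mem_Icc] at hl hl'
    simp only [Function.onFun]
    exact (((hcommF l l' hl.1 hl'.1).smul_left cc).smul_right cc).exp
  -- the inductive computation
  have key : ∀ k : ℕ, ∀ hcm, ((Finset.Icc 1 k).noncommProd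
        (fun l => NormedSpace.exp (cc • Ffin γ χ (Jblock ia ib n l) x)) hcm ∈
        closure ((M (a + sig 1) (b + sig k + (p : ℤ) - 1) : Subalgebra ℂ A) : Set A)) ∧
      χ ((Finset.Icc 1 k).noncommProd
        (fun l => NormedSpace.exp (cc • Ffin γ χ (Jblock ia ib n l) x)) hcm)
        = ∏ l ∈ Finset.Icc 1 k, χ (NormedSpace.exp (cc • Ffin γ χ (Jblock ia ib n l) x)) := by
    intro k
    induction k with
    | zero =>
      intro hcm
      have he : Finset.Icc 1 0 = (∅ : Finset ℕ) := by simp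
      have hrw := Finset.noncommProd_congr he (fun _ _ => rfl) hcm
      have h0 : (Finset.Icc 1 0).noncommProd
          (fun l => NormedSpace.exp (cc • Ffin γ χ (Jblock ia ib n l) x)) hcm = 1 := by
        rw [hrw]
        exact Finset.noncommProd_empty _ _
      rw [h0]
      constructor
      · exact subset_closure (Subalgebra.one_mem _)
      · rw [hχ1, he, Finset.prod_empty]
    | succ k ih =>
      intro hcm
      have hstep : Finset.Icc 1 (k + 1) = insert (k + 1) (Finset.Icc 1 k) := by
        ext j
        simp only [Finset.mem_Icc, Finset.mem_insert]
        omega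
      have hnotmem : (k + 1) ∉ Finset.Icc 1 k := by simp
      have hrw := Finset.noncommProd_congr hstep (fun _ _ => rfl) hcm
      have h0 : (Finset.Icc 1 (k + 1)).noncommProd
          (fun l => NormedSpace.exp (cc • Ffin γ χ (Jblock ia ib n l) x)) hcm =
          NormedSpace.exp (cc • Ffin γ χ (Jblock ia ib n (k + 1)) x) *
          (Finset.Icc 1 k).noncommProd
          (fun l => NormedSpace.exp (cc • Ffin γ χ (Jblock ia ib n l) x)) (hPgen k) := by
        rw [hrw]
        exact Finset.noncommProd_insert_of_notMem _ _ _ _ hnotmem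
      rw [h0]
      have e1 : NormedSpace.exp (cc • Ffin γ χ (Jblock ia ib n (k + 1)) x) ∈
          (M (a + sig 1) (b + sig (k + 1) + (p : ℤ) - 1)).topologicalClosure := by
        rw [← hmemTC]
        exact closure_mono (SetLike.coe_subset_coe.mpr (hsubT (k + 1) (k + 1) le_rfl))
          (hgmem (k + 1))
      have e2 := (ih (hPgen k)).1
      have e2' : (Finset.Icc 1 k).noncommProd
          (fun l => NormedSpace.exp (cc • Ffin γ χ (Jblock ia ib n l) x)) (hPgen k) ∈
          (M (a + sig 1) (b + sig (k + 1) + (p : ℤ) - 1)).topologicalClosure := by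
        rw [← hmemTC]
        exact closure_mono (SetLike.coe_subset_coe.mpr (hTmono k)) e2
      constructor
      · rw [hmemTC]
        exact Subalgebra.mul_mem _ e1 e2'
      · have hprod : ∏ l ∈ Finset.Icc 1 (k + 1),
            χ (NormedSpace.exp (cc • Ffin γ χ (Jblock ia ib n l) x))
            = χ (NormedSpace.exp (cc • Ffin γ χ (Jblock ia ib n (k + 1)) x)) *
              ∏ l ∈ Finset.Icc 1 k, χ (NormedSpace.exp (cc • Ffin γ χ (Jblock ia ib n l) x)) := by
          rw [hstep, Finset.prod_insert hnotmem]
        rw [hprod, ← (ih (hPgen k)).2]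
        rcases Nat.eq_zero_or_pos k with hk0 | hk1
        · subst hk0
          have he : Finset.Icc 1 0 = (∅ : Finset ℕ) := by simp
          have h00 : (Finset.Icc 1 0).noncommProd
              (fun l => NormedSpace.exp (cc • Ffin γ χ (Jblock ia ib n l) x)) (hPgen 0) = 1 := by
            rw [Finset.noncommProd_congr he (fun _ _ => rfl) (hPgen 0)]
            exact Finset.noncommProd_empty _ _
          rw [h00, mul_one, hχ1, mul_one]
        · refine hclosχ (a + sig (k + 1)) (b + sig (k + 1) + (p : ℤ) - 1)
            (a + sig 1) (b + sig k + (p : ℤ) - 1) (hvalid (k + 1)) (hvalid2 k)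
            (Or.inr (hsep k (k + 1) hk1 (Nat.lt_succ_self k))) _ (hgmem (k + 1)) _ ?_
          rw [hmemTC] at e2 ⊢
          exact e2
  -- translation invariance
  have hshift : ∀ l : ℕ, 1 ≤ l →
      χ (NormedSpace.exp (cc • Ffin γ χ (Jblock ia ib n l) x)) =
      χ (NormedSpace.exp (cc • Ffin γ χ (Jblock ia ib n 1) x)) := by
    intro l hl
    have ht : Jblock ia ib n l =
        (Jblock ia ib n 1).map (addLeftEmbedding ((((l - 1) * (p + q) : ℕ)) : ℤ)) := by
      rw [hJb l, hJb 1, hsig1', Finset.map_add_left_Icc]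
      congr 1
      · simp only [hsig]; ring
      · simp only [hsig]; ring
    have hFt : γ ((((l - 1) * (p + q) : ℕ)) : ℤ) (Ffin γ χ (Jblock ia ib n 1) x)
        = Ffin γ χ (Jblock ia ib n l) x := by
      simp only [Ffin, hcard]
      rw [map_smul, map_sum]
      congr 1
      rw [ht, Finset.sum_map]
      refine Finset.sum_congr rfl fun j hj => ?_
      simp only [addLeftEmbedding_apply]
      rw [map_sub, map_smul, map_one, ← hγadd]
    calc χ (NormedSpace.exp (cc • Ffin γ χ (Jblock ia ib n l) x))
        = χ (NormedSpace.exp (γ ((((l - 1) * (p + q) : ℕ)) : ℤ)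
            (cc • Ffin γ χ (Jblock ia ib n 1) x))) := by
          rw [map_smul, hFt]
    _ = χ (γ ((((l - 1) * (p + q) : ℕ)) : ℤ)
            (NormedSpace.exp (cc • Ffin γ χ (Jblock ia ib n 1) x))) := by
          rw [NormedSpace.map_exp (γ _) (hγcont _)]
    _ = χ (NormedSpace.exp (cc • Ffin γ χ (Jblock ia ib n 1) x)) := hχinv _ _
  -- conclusion
  have hfinal : χ (NormedSpace.exp (Complex.I • sJ γ χ ia ib n x))
      = ∏ l ∈ Finset.Icc 1 m, χ (NormedSpace.exp (cc • Ffin γ χ (Jblock ia ib n l) x)) := by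
    rw [hsJ, hexp]
    exact (key m (hPgen m)).2
  rw [hfinal]
  have hcongr : ∀ l ∈ Finset.Icc 1 m,
      χ (NormedSpace.exp (cc • Ffin γ χ (Jblock ia ib n l) x))
      = χ (NormedSpace.exp (cc • Ffin γ χ (Jblock ia ib n 1) x)) := by
    intro l hl
    rw [Finset.mem_Icc] at hl
    exact hshift l hl.1
  rw [Finset.prod_congr rfl hcongr, Finset.prod_const, Nat.card_Icc]
  norm_num
end
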